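/- arXiv:2510.27299 — 8 statements merged into one kernel-verified Lean document; each statement's English description precedes it below -/
import Mathlib

section
/- Let A be an associative unital K-algebra equipped with a double Poisson bracket ⦃-,-⦄. Then there is a unique Lie algebra structure [-,-] on the quotient K-vector space A_cyc := A/[A,A] such that [π(x), π(y)] = π(m(⦃x,y⦄)) for all x, y ∈ A, where π : A → A_cyc is the canonical projection. In particular, m(⦃x,y⦄) ∈ [A,A] whenever x ∈ [A,A] or y ∈ [A,A], m(⦃x,y⦄) + m(⦃y,x⦄) ∈ [A,A] for all x, y, and the Jacobi identity for (x,y) ↦ m(⦃x,y⦄) holds modulo [A,A]. -/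
open TensorProduct

noncomputable section

universe u v w

/-- The cyclic permutation `ρ : A⊗A⊗A → A⊗A⊗A`, `(x⊗y)⊗z ↦ (z⊗x)⊗y`. -/
def cyc (K : Type u) [Field K] (A : Type v) [Ring A] [Algebra K A] :
    ((A ⊗[K] A) ⊗[K] A) →ₗ[K] ((A ⊗[K] A) ⊗[K] A) :=
  ((TensorProduct.assoc K A A A).symm.toLinearMap).comp
    ((TensorProduct.comm K (A ⊗[K] A) A).toLinearMap)

/-- A double bracket on the `K`-algebra `A`: a `K`-bilinear map `A × A → A ⊗ A` which is
antisymmetric with respect to the flip and satisfies the Leibniz rule in its second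
argument for the outer bimodule structure on `A ⊗ A`. -/
structure DoubleBracket (K : Type u) (A : Type v) [Field K] [Ring A] [Algebra K A] where
  br : A →ₗ[K] A →ₗ[K] A ⊗[K] A
  antisymm : ∀ x y : A, br y x = - (TensorProduct.comm K A A) (br x y)
  leibniz : ∀ x a b : A, br x (a * b)
      = (TensorProduct.map (LinearMap.mulLeft K a) (LinearMap.id : A →ₗ[K] A)) (br x b)
        + (TensorProduct.map (LinearMap.id : A →ₗ[K] A) (LinearMap.mulRight K b)) (br x a)

/-- The double Jacobi identity: a double bracket is a double Poisson bracket iff it holds. -/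
def DoubleBracket.IsPoisson {K : Type u} {A : Type v} [Field K] [Ring A] [Algebra K A]
    (D : DoubleBracket K A) : Prop :=
  ∀ x y z : A,
    (LinearMap.rTensor A (D.br x)) (D.br y z)
      + cyc K A ((LinearMap.rTensor A (D.br y)) (D.br z x))
      + cyc K A (cyc K A ((LinearMap.rTensor A (D.br z)) (D.br x y))) = 0

/-- The associated bracket `{x,y} = m(⦃x,y⦄)`. -/
def DoubleBracket.ab {K : Type u} {A : Type v} [Field K] [Ring A] [Algebra K A]
    (D : DoubleBracket K A) (x y : A) : A :=
  LinearMap.mul' K A (D.br x y)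

/-- `[A,A]`: the `K`-linear span of all commutators. -/
def commSpan (K : Type u) [Field K] (A : Type v) [Ring A] [Algebra K A] : Submodule K A :=
  Submodule.span K {z : A | ∃ u v : A, z = u * v - v * u}

/-- `K·1 + [A,A]`. -/
def natSub (K : Type u) [Field K] (A : Type v) [Ring A] [Algebra K A] : Submodule K A :=
  Submodule.span K {(1 : A)} ⊔ commSpan K A

section Aux

variable {K : Type u} [Field K] {A : Type v} [Ring A] [Algebra K A]

lemma comm_mem (u v : A) : u * v - v * u ∈ commSpan K A :=
  Submodule.subset_span ⟨u, v, rfl⟩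

lemma mul'_sub_comm_mem (t : A ⊗[K] A) :
    LinearMap.mul' K A t - LinearMap.mul' K A ((TensorProduct.comm K A A) t)
      ∈ commSpan K A := by
  induction t using TensorProduct.induction_on with
  | zero => simp
  | tmul u v => simpa using comm_mem u v
  | add a b ha hb =>
    have h := (commSpan K A).add_mem ha hb
    rw [map_add, map_add, map_add]
    convert h using 1
    abel

variable (D : DoubleBracket K A)

/-- `ab` as a bilinear map. -/
def abL : A →ₗ[K] A →ₗ[K] A :=
  (LinearMap.llcomp K A (A ⊗[K] A) A (LinearMap.mul' K A)) ∘ₗ D.br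

@[simp] lemma abL_apply (x y : A) : abL D x y = D.ab x y := rfl

lemma comm_br (y z : A) :
    (TensorProduct.comm K A A) (D.br y z) = - D.br z y := by
  have hcc : ∀ t : A ⊗[K] A, (TensorProduct.comm K A A) ((TensorProduct.comm K A A) t) = t := by
    intro t
    induction t using TensorProduct.induction_on with
    | zero => simp
    | tmul u v => simp
    | add s r hs hr => simp [map_add, hs, hr]
  rw [D.antisymm z y]
  simp [hcc]

lemma mul'_map_left (a : A) (t : A ⊗[K] A) :
    LinearMap.mul' K A
      ((TensorProduct.map (LinearMap.mulLeft K a) (LinearMap.id : A →ₗ[K] A)) t)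
      = a * LinearMap.mul' K A t := by
  induction t using TensorProduct.induction_on with
  | zero => simp
  | tmul u v => simp [mul_assoc]
  | add s r hs hr => simp [map_add, hs, hr, mul_add]

lemma mul'_map_right (b : A) (t : A ⊗[K] A) :
    LinearMap.mul' K A
      ((TensorProduct.map (LinearMap.id : A →ₗ[K] A) (LinearMap.mulRight K b)) t)
      = LinearMap.mul' K A t * b := by
  induction t using TensorProduct.induction_on with
  | zero => simp
  | tmul u v => simp [mul_assoc]
  | add s r hs hr => simp [map_add, hs, hr, add_mul]

lemma ab_mul (x a b : A) :
    D.ab x (a * b) = a * D.ab x b + D.ab x a * b := by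
  unfold DoubleBracket.ab
  rw [D.leibniz, map_add, mul'_map_left, mul'_map_right]

lemma ab_antisymm_mem (x y : A) : D.ab x y + D.ab y x ∈ commSpan K A := by
  have h := mul'_sub_comm_mem (K := K) (D.br x y)
  rw [comm_br] at h
  simpa [DoubleBracket.ab] using h

lemma ab_mem_right (x : A) {y : A} (hy : y ∈ commSpan K A) :
    D.ab x y ∈ commSpan K A := by
  induction hy using Submodule.span_induction with
  | mem z hz =>
    obtain ⟨u, v, rfl⟩ := hz
    have hE : D.ab x (u * v - v * u)
        = (u * D.ab x v - D.ab x v * u) + (D.ab x u * v - v * D.ab x u) := by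
      have h1 : D.ab x (u * v - v * u) = D.ab x (u * v) - D.ab x (v * u) := by
        simp [DoubleBracket.ab, map_sub]
      rw [h1, ab_mul, ab_mul]
      abel
    rw [hE]
    exact (commSpan K A).add_mem (comm_mem _ _) (comm_mem _ _)
  | zero => simpa [DoubleBracket.ab] using (commSpan K A).zero_mem
  | add a b _ _ ha hb =>
    have : D.ab x (a + b) = D.ab x a + D.ab x b := by simp [DoubleBracket.ab, map_add]
    rw [this]; exact (commSpan K A).add_mem ha hb
  | smul c a _ ha =>
    have : D.ab x (c • a) = c • D.ab x a := by simp [DoubleBracket.ab, map_smul]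
    rw [this]; exact (commSpan K A).smul_mem c ha

lemma ab_mem_left {x : A} (hx : x ∈ commSpan K A) (y : A) :
    D.ab x y ∈ commSpan K A := by
  have h1 := ab_antisymm_mem D x y
  have h2 := ab_mem_right D y hx
  have : D.ab x y = (D.ab x y + D.ab y x) - D.ab y x := by abel
  rw [this]
  exact (commSpan K A).sub_mem h1 h2

/-- `(u⊗v)⊗w ↦ u*v*w`. -/
def mul3 : ((A ⊗[K] A) ⊗[K] A) →ₗ[K] A :=
  (LinearMap.mul' K A) ∘ₗ (LinearMap.rTensor A (LinearMap.mul' K A))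

lemma mul3_cyc_sub (t : ((A ⊗[K] A) ⊗[K] A)) :
    mul3 (cyc K A t) - mul3 t ∈ commSpan K A := by
  induction t using TensorProduct.induction_on with
  | zero => simp
  | tmul s w =>
    induction s using TensorProduct.induction_on with
    | zero => simp
    | tmul u v =>
      have : mul3 (cyc K A ((u ⊗ₜ[K] v) ⊗ₜ[K] w)) - mul3 ((u ⊗ₜ[K] v) ⊗ₜ[K] w)
          = w * (u * v) - (u * v) * w := by
        simp [cyc, mul3, mul_assoc]
      rw [this]; exact comm_mem _ _
    | add s r hs hr =>
      have h := (commSpan K A).add_mem hs hr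
      have e1 : (s + r) ⊗ₜ[K] w = s ⊗ₜ[K] w + r ⊗ₜ[K] w := TensorProduct.add_tmul s r w
      rw [e1, map_add, map_add, map_add]
      convert h using 1; abel
  | add a b ha hb =>
    have h := (commSpan K A).add_mem ha hb
    rw [map_add, map_add, map_add]
    convert h using 1; abel

/-- `u⊗v ↦ (ab x u) * v`. -/
def f1 (x : A) : (A ⊗[K] A) →ₗ[K] A :=
  (LinearMap.mul' K A) ∘ₗ (LinearMap.rTensor A (abL D x))

/-- `u⊗v ↦ u * (ab x v)`. -/
def f2 (x : A) : (A ⊗[K] A) →ₗ[K] A :=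
  (LinearMap.mul' K A) ∘ₗ (LinearMap.lTensor A (abL D x))

lemma mul3_rTensor_br (x : A) (t : A ⊗[K] A) :
    mul3 ((LinearMap.rTensor A (D.br x)) t) = f1 D x t := by
  induction t using TensorProduct.induction_on with
  | zero => simp
  | tmul u v => simp [mul3, f1, DoubleBracket.ab]
  | add s r hs hr => simp [map_add, hs, hr]

lemma ab_mul'_eq (x : A) (t : A ⊗[K] A) :
    D.ab x (LinearMap.mul' K A t) = f2 D x t + f1 D x t := by
  induction t using TensorProduct.induction_on with
  | zero => simp [DoubleBracket.ab]
  | tmul u v => simpa [f1, f2] using ab_mul D x u v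
  | add s r hs hr =>
    have : D.ab x (LinearMap.mul' K A (s + r))
        = D.ab x (LinearMap.mul' K A s) + D.ab x (LinearMap.mul' K A r) := by
      simp [DoubleBracket.ab, map_add]
    rw [this, hs, hr, map_add, map_add]
    abel

lemma f2_sub_f1comm_mem (x : A) (t : A ⊗[K] A) :
    f2 D x t - f1 D x ((TensorProduct.comm K A A) t) ∈ commSpan K A := by
  induction t using TensorProduct.induction_on with
  | zero => simp
  | tmul u v => simpa [f1, f2] using comm_mem (K := K) u (D.ab x v)
  | add s r hs hr =>
    have h := (commSpan K A).add_mem hs hr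
    rw [map_add, map_add, map_add]
    convert h using 1; abel

lemma ab_ab_mem (x y z : A) :
    D.ab x (D.ab y z) - f1 D x (D.br y z) + f1 D x (D.br z y) ∈ commSpan K A := by
  have h0 : D.ab x (D.ab y z) = f2 D x (D.br y z) + f1 D x (D.br y z) :=
    ab_mul'_eq D x (D.br y z)
  have h1 := f2_sub_f1comm_mem D x (D.br y z)
  rw [comm_br, map_neg] at h1
  have : D.ab x (D.ab y z) - f1 D x (D.br y z) + f1 D x (D.br z y)
      = f2 D x (D.br y z) - - f1 D x (D.br z y) := by rw [h0]; abel
  rw [this]; exact h1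

lemma cyclic_mem (hD : D.IsPoisson) (x y z : A) :
    f1 D x (D.br y z) + f1 D y (D.br z x) + f1 D z (D.br x y) ∈ commSpan K A := by
  set E1 := (LinearMap.rTensor A (D.br x)) (D.br y z) with hE1
  set E2 := (LinearMap.rTensor A (D.br y)) (D.br z x) with hE2
  set E3 := (LinearMap.rTensor A (D.br z)) (D.br x y) with hE3
  have h0 : mul3 E1 + mul3 (cyc K A E2) + mul3 (cyc K A (cyc K A E3)) = (0 : A) := by
    rw [← map_add, ← map_add, hD x y z, map_zero]
  have c2 := mul3_cyc_sub (K := K) (A := A) E2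
  have c3 := mul3_cyc_sub (K := K) (A := A) E3
  have c3' := mul3_cyc_sub (K := K) (A := A) (cyc K A E3)
  have hf : f1 D x (D.br y z) + f1 D y (D.br z x) + f1 D z (D.br x y)
      = mul3 E1 + mul3 E2 + mul3 E3 := by
    rw [← mul3_rTensor_br, ← mul3_rTensor_br, ← mul3_rTensor_br]
  have hS : mul3 E1 + mul3 E2 + mul3 E3
      = (mul3 E1 + mul3 (cyc K A E2) + mul3 (cyc K A (cyc K A E3)))
        - ((mul3 (cyc K A E2) - mul3 E2)
          + ((mul3 (cyc K A (cyc K A E3)) - mul3 (cyc K A E3))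
            + (mul3 (cyc K A E3) - mul3 E3))) := by abel
  rw [hf, hS, h0, zero_sub]
  exact (commSpan K A).neg_mem
    ((commSpan K A).add_mem c2 ((commSpan K A).add_mem c3' c3))

lemma jacobi_mem (hD : D.IsPoisson) (x y z : A) :
    D.ab x (D.ab y z) - D.ab (D.ab x y) z - D.ab y (D.ab x z) ∈ commSpan K A := by
  have P1 := ab_ab_mem D x y z
  have P2 := ab_ab_mem D z x y
  have P3 := ab_ab_mem D y x z
  have P4 := ab_antisymm_mem D (D.ab x y) z
  have C1 := cyclic_mem D hD x y z
  have C2 := cyclic_mem D hD x z y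
  have key : D.ab x (D.ab y z) - D.ab (D.ab x y) z - D.ab y (D.ab x z)
      = (D.ab x (D.ab y z) - f1 D x (D.br y z) + f1 D x (D.br z y))
        - (D.ab y (D.ab x z) - f1 D y (D.br x z) + f1 D y (D.br z x))
        + (D.ab z (D.ab x y) - f1 D z (D.br x y) + f1 D z (D.br y x))
        - (D.ab (D.ab x y) z + D.ab z (D.ab x y))
        + (f1 D x (D.br y z) + f1 D y (D.br z x) + f1 D z (D.br x y))
        - (f1 D x (D.br z y) + f1 D z (D.br y x) + f1 D y (D.br x z)) := by abel
  rw [key]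
  exact Submodule.sub_mem _
    (Submodule.add_mem _
      (Submodule.sub_mem _
        (Submodule.add_mem _ (Submodule.sub_mem _ P1 P3) P2) P4) C1) C2

end Aux

/-- For a double Poisson bracket on `A`, there is a unique Lie algebra
structure on `A_cyc = A/[A,A]` with `[π x, π y] = π (m ⦃x,y⦄)`; in particular
`m⦃x,y⦄ ∈ [A,A]` if `x ∈ [A,A]` or `y ∈ [A,A]`, `m⦃x,y⦄ + m⦃y,x⦄ ∈ [A,A]`, and the
Jacobi identity for `(x,y) ↦ m⦃x,y⦄` holds modulo `[A,A]`. -/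
theorem statement_0 (K : Type u) [Field K] [CharZero K] (A : Type v) [Ring A] [Algebra K A]
    (D : DoubleBracket K A) (hD : D.IsPoisson) :
    (∃! L : (A ⧸ commSpan K A) →ₗ[K] (A ⧸ commSpan K A) →ₗ[K] (A ⧸ commSpan K A),
        (∀ x y : A, L ((commSpan K A).mkQ x) ((commSpan K A).mkQ y)
            = (commSpan K A).mkQ (D.ab x y))
        ∧ (∀ α β, L α β = - L β α)
        ∧ (∀ α β γ, L α (L β γ) = L (L α β) γ + L β (L α γ)))
    ∧ (∀ x y : A, (x ∈ commSpan K A ∨ y ∈ commSpan K A) → D.ab x y ∈ commSpan K A)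
    ∧ (∀ x y : A, D.ab x y + D.ab y x ∈ commSpan K A)
    ∧ (∀ x y z : A,
        D.ab x (D.ab y z) - D.ab (D.ab x y) z - D.ab y (D.ab x z) ∈ commSpan K A) := by
  have hmkzero : ∀ a : A, a ∈ commSpan K A → (commSpan K A).mkQ a = 0 := fun a ha => by
    simpa [Submodule.mkQ_apply] using (Submodule.Quotient.mk_eq_zero _).2 ha
  let B0 : A →ₗ[K] A →ₗ[K] A ⧸ commSpan K A :=
    (LinearMap.llcomp K A A (A ⧸ commSpan K A) (commSpan K A).mkQ) ∘ₗ abL D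
  have hB0 : ∀ x y : A, B0 x y = (commSpan K A).mkQ (D.ab x y) := fun _ _ => rfl
  have hleft : commSpan K A ≤ LinearMap.ker B0 := by
    intro x hx
    rw [LinearMap.mem_ker]
    ext y
    simp only [LinearMap.zero_apply]
    rw [hB0]
    exact hmkzero _ (ab_mem_left D hx y)
  set L1 := (commSpan K A).liftQ B0 hleft with hL1def
  have hL1 : ∀ x : A, L1 ((commSpan K A).mkQ x) = B0 x := fun x => by
    rw [hL1def, Submodule.mkQ_apply, Submodule.liftQ_apply]
  have hflip : commSpan K A ≤ LinearMap.ker L1.flip := by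
    intro y hy
    rw [LinearMap.mem_ker]
    ext x
    simp only [LinearMap.zero_comp, LinearMap.zero_apply, LinearMap.comp_apply,
      LinearMap.flip_apply]
    rw [hL1, hB0]
    exact hmkzero _ (ab_mem_right D x hy)
  set L := ((commSpan K A).liftQ L1.flip hflip).flip with hLdef
  have hL : ∀ x y : A, L ((commSpan K A).mkQ x) ((commSpan K A).mkQ y)
      = (commSpan K A).mkQ (D.ab x y) := by
    intro x y
    rw [hLdef]
    simp only [LinearMap.flip_apply]
    rw [Submodule.mkQ_apply, Submodule.liftQ_apply, LinearMap.flip_apply, hL1, hB0]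
  refine ⟨⟨L, ⟨hL, ?_, ?_⟩, ?_⟩, ?_, fun x y => ab_antisymm_mem D x y,
    fun x y z => jacobi_mem D hD x y z⟩
  · intro α β
    obtain ⟨x, rfl⟩ := (commSpan K A).mkQ_surjective α
    obtain ⟨y, rfl⟩ := (commSpan K A).mkQ_surjective β
    rw [hL, hL]
    have h := hmkzero _ (ab_antisymm_mem D x y)
    rw [map_add] at h
    exact eq_neg_of_add_eq_zero_left h
  · intro α β γ
    obtain ⟨x, rfl⟩ := (commSpan K A).mkQ_surjective α
    obtain ⟨y, rfl⟩ := (commSpan K A).mkQ_surjective β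
    obtain ⟨z, rfl⟩ := (commSpan K A).mkQ_surjective γ
    rw [hL, hL, hL, hL, hL]
    have h := hmkzero _ (jacobi_mem D hD x y z)
    rw [map_sub, map_sub, sub_sub, sub_eq_zero] at h
    exact h
  · rintro L' ⟨h1, -, -⟩
    apply LinearMap.ext; intro α
    apply LinearMap.ext; intro β
    obtain ⟨x, rfl⟩ := (commSpan K A).mkQ_surjective α
    obtain ⟨y, rfl⟩ := (commSpan K A).mkQ_surjective β
    rw [h1, hL]
  · rintro x y (hx | hy)
    · exact ab_mem_left D hx y
    · exact ab_mem_right D x hy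
end
end

section
/- Let A be an associative unital K-algebra with a double Poisson bracket ⦃-,-⦄ and set {x,y} := m(⦃x,y⦄). Extend each {x,−} to A⊗A by {x, u⊗v} := {x,u}⊗v + u⊗{x,v} (K-linearly). Then for all x, y, z ∈ A the identity {x, ⦃y,z⦄} − ⦃{x,y}, z⦄ − ⦃y, {x,z}⦄ = 0 holds in A⊗A. -/
open TensorProduct

noncomputable section

universe u v w

section Aux

variable {K : Type u} [Field K] {A : Type v} [Ring A] [Algebra K A]

private lemma comm_comm' (w : A ⊗[K] A) :
    TensorProduct.comm K A A (TensorProduct.comm K A A w) = w := by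
  induction w using TensorProduct.induction_on with
  | zero => simp
  | tmul a b => simp
  | add u v hu hv => simp [map_add, hu, hv]

private lemma comm_map' (f g : A →ₗ[K] A) (w : A ⊗[K] A) :
    TensorProduct.comm K A A (TensorProduct.map f g w)
      = TensorProduct.map g f (TensorProduct.comm K A A w) := by
  induction w using TensorProduct.induction_on with
  | zero => simp
  | tmul a b => simp
  | add u v hu hv => simp [map_add, hu, hv]

private lemma h1 (t : A) (w : A ⊗[K] A) :
    LinearMap.rTensor A (LinearMap.mul' K A) (cyc K A (w ⊗ₜ[K] t))
      = TensorProduct.map (LinearMap.mulLeft K t) LinearMap.id w := by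
  induction w using TensorProduct.induction_on with
  | zero => simp
  | tmul e f => simp [cyc]
  | add u v hu hv => simp only [add_tmul, map_add, hu, hv]

private lemma h2' (t : A) (w : A ⊗[K] A) :
    LinearMap.rTensor A (LinearMap.mul' K A) (cyc K A (cyc K A (w ⊗ₜ[K] t)))
      = TensorProduct.map (LinearMap.mulRight K t) LinearMap.id
          (TensorProduct.comm K A A w) := by
  induction w using TensorProduct.induction_on with
  | zero => simp
  | tmul e f => simp [cyc]
  | add u v hu hv => simp only [add_tmul, map_add, hu, hv]

private lemma comm_rTensor_comm (f : A →ₗ[K] A) (w : A ⊗[K] A) :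
    TensorProduct.comm K A A
        (LinearMap.rTensor A f (TensorProduct.comm K A A w))
      = LinearMap.lTensor A f w := by
  induction w using TensorProduct.induction_on with
  | zero => simp
  | tmul a b => simp
  | add u v hu hv => simp [map_add, hu, hv]

/-- Leibniz in the first argument. -/
private lemma leib1 (D : DoubleBracket K A) (a b c : A) :
    D.br (a * b) c
      = TensorProduct.map (LinearMap.mulRight K b) LinearMap.id (D.br a c)
        + TensorProduct.map LinearMap.id (LinearMap.mulLeft K a) (D.br b c) := by
  have h := D.antisymm c (a * b)
  rw [D.leibniz c a b] at h
  rw [h, map_add, comm_map', comm_map']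
  have ha : TensorProduct.comm K A A (D.br c a) = - D.br a c := by
    rw [D.antisymm c a, neg_neg]
  have hb : TensorProduct.comm K A A (D.br c b) = - D.br b c := by
    rw [D.antisymm c b, neg_neg]
  rw [ha, hb]
  simp only [map_neg]
  abel

private lemma lemP (D : DoubleBracket K A) (y : A) (w : A ⊗[K] A) :
    LinearMap.rTensor A (LinearMap.mul' K A)
        (cyc K A (LinearMap.rTensor A (D.br y) (TensorProduct.comm K A A w)))
      + TensorProduct.comm K A A (LinearMap.rTensor A (LinearMap.mul' K A)
          (cyc K A (cyc K A (LinearMap.rTensor A (D.br y) w))))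
      = D.br y (LinearMap.mul' K A w) := by
  induction w using TensorProduct.induction_on with
  | zero => simp
  | tmul s t =>
      rw [TensorProduct.comm_tmul, LinearMap.rTensor_tmul, LinearMap.rTensor_tmul,
        h1, h2', comm_map', comm_comm', LinearMap.mul'_apply, D.leibniz y s t]
  | add u v hu hv => simp only [map_add, LinearMap.map_add] at hu hv ⊢; rw [← hu, ← hv]; abel

private lemma lemQ (D : DoubleBracket K A) (c : A) (w : A ⊗[K] A) :
    LinearMap.rTensor A (LinearMap.mul' K A)
        (cyc K A (cyc K A (LinearMap.rTensor A (D.br c) w)))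
      + TensorProduct.comm K A A (LinearMap.rTensor A (LinearMap.mul' K A)
          (cyc K A (LinearMap.rTensor A (D.br c) (TensorProduct.comm K A A w))))
      = - D.br (LinearMap.mul' K A w) c := by
  induction w using TensorProduct.induction_on with
  | zero => simp
  | tmul a b =>
      rw [TensorProduct.comm_tmul, LinearMap.rTensor_tmul, LinearMap.rTensor_tmul,
        h1, h2', comm_map', LinearMap.mul'_apply, leib1 D a b c]
      have ha : TensorProduct.comm K A A (D.br c a) = - D.br a c := by
        rw [D.antisymm c a, neg_neg]
      have hb : TensorProduct.comm K A A (D.br c b) = - D.br b c := by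
        rw [D.antisymm c b, neg_neg]
      rw [ha, hb]
      simp only [map_neg, neg_add]
  | add u v hu hv =>
      simp only [map_add, LinearMap.map_add, LinearMap.add_apply] at hu hv ⊢
      rw [neg_add, ← hu, ← hv]; abel

end Aux
/-- For a double Poisson bracket, with `{x,y} = m⦃x,y⦄` and the extension
`{x, u⊗v} = {x,u}⊗v + u⊗{x,v}` of `{x,−}` to `A ⊗ A`, the identity
`{x,⦃y,z⦄} − ⦃{x,y},z⦄ − ⦃y,{x,z}⦄ = 0` holds in `A ⊗ A`. -/
theorem statement_1 (K : Type u) [Field K] [CharZero K] (A : Type v) [Ring A] [Algebra K A]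
    (D : DoubleBracket K A) (hD : D.IsPoisson) (x y z : A) :
    (LinearMap.rTensor A ((LinearMap.mul' K A).comp (D.br x))
        + LinearMap.lTensor A ((LinearMap.mul' K A).comp (D.br x))) (D.br y z)
      - D.br (D.ab x y) z - D.br y (D.ab x z) = 0 := by
  have hJ1 := hD x y z
  have hJ2 := hD x z y
  have hzx : D.br z x = - TensorProduct.comm K A A (D.br x z) := D.antisymm x z
  have hyx : D.br y x = - TensorProduct.comm K A A (D.br x y) := D.antisymm x y
  have hzy : D.br z y = - TensorProduct.comm K A A (D.br y z) := D.antisymm y z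
  rw [hzx] at hJ1
  rw [hzy, hyx] at hJ2
  have k1 := congrArg (LinearMap.rTensor A (LinearMap.mul' K A)) hJ1
  have k2 := congrArg (fun u => TensorProduct.comm K A A
      (LinearMap.rTensor A (LinearMap.mul' K A) u)) hJ2
  simp only [map_add, map_neg, map_zero] at k1 k2
  have hcomp : ∀ u : A ⊗[K] A,
      LinearMap.rTensor A (LinearMap.mul' K A) (LinearMap.rTensor A (D.br x) u)
        = LinearMap.rTensor A ((LinearMap.mul' K A).comp (D.br x)) u := by
    intro u
    rw [← LinearMap.comp_apply, ← LinearMap.rTensor_comp]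
  rw [hcomp] at k1
  rw [hcomp, comm_rTensor_comm] at k2
  have hP := lemP D y (D.br x z)
  have hQ := lemQ D z (D.br x y)
  have habz : D.ab x z = LinearMap.mul' K A (D.br x z) := rfl
  have haby : D.ab x y = LinearMap.mul' K A (D.br x y) := rfl
  rw [LinearMap.add_apply, habz, haby]
  linear_combination (norm := abel) k1 - k2 + hP - hQ
end
end

section
/- Let A be an associative unital K-algebra with a double Poisson bracket ⦃-,-⦄ and set {x,y} := m(⦃x,y⦄). Then for each x ∈ A the map {x,−} : A → A is a K-linear derivation of A (in particular {x,1} = 0), and the bracket satisfies the left Leibniz (Loday) identity {x,{y,z}} = {{x,y},z} + {y,{x,z}} for all x, y, z ∈ A; that is, (A, {−,−}) is a Loday (left Leibniz) algebra over K. -/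
open TensorProduct

noncomputable section

universe u v w

/-!
Both the derivation property and `{x,1} = 0` are the image under `m` of the Leibniz rule for
`⦃x,-⦄`. For the Loday identity, apply the triple product `u⊗v⊗w ↦ uvw` to the difference of the
double Jacobi identities for `(x,y,z)` and `(y,x,z)`. The terms `⦃x,⦃y,z⦄⦄_L` and
`ρ ⦃x,⦃z,y⦄⦄_L` become the two halves of `{x,{y,z}}` (the derivation `{x,-}` applied to
`m ⦃y,z⦄`), likewise for `y`, and the two terms `ρ² ⦃z,⦃x,y⦄⦄_L`, `ρ² ⦃z,⦃y,x⦄⦄_L` combine,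
via antisymmetry and the Leibniz rule for `⦃z,-⦄`, into `-{{x,y},z}`.
-/

open LinearMap

namespace LinearMap

variable {R : Type u} [CommSemiring R] {A : Type v} [Semiring A] [Algebra R A]

variable (R A) in
def tripleMul : (A ⊗[R] A) ⊗[R] A →ₗ[R] A :=
  mul' R A ∘ₗ rTensor A (mul' R A)

@[simp]
lemma tripleMul_tmul (s : A ⊗[R] A) (q : A) :
    tripleMul R A (s ⊗ₜ q) = mul' R A s * q := rfl

lemma tripleMul_rTensor (f : A →ₗ[R] A ⊗[R] A) (t : A ⊗[R] A) :
    tripleMul R A (rTensor A f t) = mul' R A (rTensor A (mul' R A ∘ₗ f) t) := by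
  rw [tripleMul, comp_apply, ← rTensor_comp_apply]

lemma mul'_rTensor_mulLeft (a : A) (s : A ⊗[R] A) :
    mul' R A (rTensor A (mulLeft R a) s) = a * mul' R A s := by
  induction s using TensorProduct.induction_on with
  | zero => simp
  | tmul p q => simp [mul_assoc]
  | add s t hs ht => simp [hs, ht, mul_add]

lemma mul'_lTensor_mulRight (b : A) (s : A ⊗[R] A) :
    mul' R A (lTensor A (mulRight R b) s) = mul' R A s * b := by
  induction s using TensorProduct.induction_on with
  | zero => simp
  | tmul p q => simp [mul_assoc]
  | add s t hs ht => simp [hs, ht, add_mul]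

lemma mul'_rTensor_mulRight_eq_lTensor_mulLeft (u : A) (s : A ⊗[R] A) :
    mul' R A (rTensor A (mulRight R u) s) = mul' R A (lTensor A (mulLeft R u) s) := by
  induction s using TensorProduct.induction_on with
  | zero => simp
  | tmul p q => simp [mul_assoc]
  | add s t hs ht => simp [hs, ht]

end LinearMap

section Cyc

variable {K : Type u} [Field K] {A : Type v} [Ring A] [Algebra K A]

@[simp]
lemma cyc_tmul (a b c : A) : cyc K A ((a ⊗ₜ b) ⊗ₜ c) = (c ⊗ₜ a) ⊗ₜ b := rfl

lemma tripleMul_cyc_tmul (s : A ⊗[K] A) (q : A) :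
    tripleMul K A (cyc K A (s ⊗ₜ q)) = q * mul' K A s := by
  induction s using TensorProduct.induction_on with
  | zero => simp
  | tmul a b => simp [mul_assoc]
  | add s t hs ht => simp [add_tmul, hs, ht, mul_add]

lemma tripleMul_cyc_rTensor (f : A →ₗ[K] A ⊗[K] A) (t : A ⊗[K] A) :
    tripleMul K A (cyc K A (rTensor A f t))
      = mul' K A (lTensor A (mul' K A ∘ₗ f) (TensorProduct.comm K A A t)) := by
  induction t using TensorProduct.induction_on with
  | zero => simp
  | tmul p q => simp [tripleMul_cyc_tmul]
  | add s t hs ht => simp [hs, ht]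

lemma tripleMul_cyc_cyc_tmul (s : A ⊗[K] A) (q : A) :
    tripleMul K A (cyc K A (cyc K A (s ⊗ₜ q)))
      = mul' K A (rTensor A (mulRight K q) (TensorProduct.comm K A A s)) := by
  induction s using TensorProduct.induction_on with
  | zero => simp
  | tmul a b => simp [mul_assoc]
  | add s t hs ht => simp [add_tmul, hs, ht]

end Cyc

namespace DoubleBracket

variable {K : Type u} [Field K] {A : Type v} [Ring A] [Algebra K A] (D : DoubleBracket K A)

lemma comm_br (x y : A) :
    TensorProduct.comm K A A (D.br x y) = -D.br y x := by
  rw [D.antisymm y x, map_neg, comm_comm]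

lemma br_one (x : A) : D.br x 1 = 0 := by
  simpa using D.leibniz x 1 1

def ad (x : A) : A →ₗ[K] A :=
  mul' K A ∘ₗ D.br x

@[simp]
lemma ad_apply (x y : A) : D.ad x y = D.ab x y := rfl

lemma ab_mul (x a b : A) :
    D.ab x (a * b) = D.ab x a * b + a * D.ab x b := by
  rw [ab, D.leibniz, map_add, add_comm]
  exact congrArg₂ (· + ·) (mul'_lTensor_mulRight b _) (mul'_rTensor_mulLeft a _)

lemma ad_mul' (x : A) (t : A ⊗[K] A) :
    D.ad x (mul' K A t) = mul' K A (rTensor A (D.ad x) t) + mul' K A (lTensor A (D.ad x) t) := by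
  induction t using TensorProduct.induction_on with
  | zero => simp [ab]
  | tmul p q => simp [ab_mul]
  | add s t hs ht => simp only [map_add, hs, ht]; abel

lemma tripleMul_cyc_cyc_rTensor_br_tmul (z u v : A) :
    tripleMul K A (cyc K A (cyc K A (rTensor A (D.br z) (u ⊗ₜ v))))
      + tripleMul K A (cyc K A (cyc K A (rTensor A (D.br z) (v ⊗ₜ u))))
      = -D.ab (u * v) z := by
  rw [rTensor_tmul, rTensor_tmul, tripleMul_cyc_cyc_tmul, tripleMul_cyc_cyc_tmul,
    mul'_rTensor_mulRight_eq_lTensor_mulLeft u, ab, D.antisymm z, D.leibniz, map_neg, neg_neg,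
    map_add, map_add, ← map_comm, ← map_comm, add_comm]
  rfl

lemma tripleMul_cyc_cyc_rTensor_br_add_comm (z : A) (t : A ⊗[K] A) :
    tripleMul K A (cyc K A (cyc K A (rTensor A (D.br z) t)))
      + tripleMul K A (cyc K A (cyc K A (rTensor A (D.br z) (TensorProduct.comm K A A t))))
      = -D.ab (mul' K A t) z := by
  induction t using TensorProduct.induction_on with
  | zero => simp [ab]
  | tmul u v => exact D.tripleMul_cyc_cyc_rTensor_br_tmul z u v
  | add s t hs ht =>
    simp only [ab, map_add, LinearMap.add_apply, neg_add] at hs ht ⊢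
    rw [← hs, ← ht]
    abel

def jacobiator (x y z : A) : (A ⊗[K] A) ⊗[K] A :=
  rTensor A (D.br x) (D.br y z) + cyc K A (rTensor A (D.br y) (D.br z x))
    + cyc K A (cyc K A (rTensor A (D.br z) (D.br x y)))

variable {D} in
lemma IsPoisson.jacobiator_eq_zero (hD : D.IsPoisson) (x y z : A) :
    D.jacobiator x y z = 0 :=
  hD x y z

lemma tripleMul_jacobiator (x y z : A) :
    tripleMul K A (D.jacobiator x y z)
      = mul' K A (rTensor A (D.ad x) (D.br y z)) - mul' K A (lTensor A (D.ad y) (D.br x z))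
        + tripleMul K A (cyc K A (cyc K A (rTensor A (D.br z) (D.br x y)))) := by
  rw [jacobiator, map_add, map_add, tripleMul_rTensor, tripleMul_cyc_rTensor, comm_br, map_neg,
    map_neg, sub_eq_add_neg]
  rfl

lemma tripleMul_jacobiator_sub_jacobiator (x y z : A) :
    tripleMul K A (D.jacobiator x y z - D.jacobiator y x z)
      = D.ab x (D.ab y z) - D.ab y (D.ab x z) - D.ab (D.ab x y) z := by
  have hx : D.ab x (D.ab y z) = _ := D.ad_mul' x (D.br y z)
  have hy : D.ab y (D.ab x z) = _ := D.ad_mul' y (D.br x z)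
  have hxy : D.ab (D.ab x y) z = -(_ + _) :=
    neg_eq_iff_eq_neg.mp (D.tripleMul_cyc_cyc_rTensor_br_add_comm z (D.br x y)).symm
  rw [map_sub, tripleMul_jacobiator, tripleMul_jacobiator, D.antisymm x y, hx, hy, hxy]
  simp only [map_neg]
  abel

end DoubleBracket

theorem statement_2_general (K : Type u) [Field K] (A : Type v) [Ring A] [Algebra K A]
    (D : DoubleBracket K A) (hD : D.IsPoisson) :
    (∀ (x : A) (c : K) (a b : A), D.ab x (c • a + b) = c • D.ab x a + D.ab x b)
    ∧ (∀ x a b : A, D.ab x (a * b) = D.ab x a * b + a * D.ab x b)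
    ∧ (∀ x : A, D.ab x 1 = 0)
    ∧ (∀ x y z : A, D.ab x (D.ab y z) = D.ab (D.ab x y) z + D.ab y (D.ab x z)) := by
  refine ⟨fun x c a b ↦ by simp [DoubleBracket.ab], D.ab_mul,
    fun x ↦ by simp [DoubleBracket.ab, D.br_one], fun x y z ↦ ?_⟩
  have h := D.tripleMul_jacobiator_sub_jacobiator x y z
  rw [hD.jacobiator_eq_zero, hD.jacobiator_eq_zero, sub_zero, map_zero, eq_comm, sub_sub,
    sub_eq_zero] at h
  rw [h, add_comm]

/-- For a double Poisson bracket on `A`, each `{x,−} = m∘⦃x,−⦄` is a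
`K`-linear derivation of `A` (in particular `{x,1} = 0`), and the bracket satisfies the
left Leibniz (Loday) identity `{x,{y,z}} = {{x,y},z} + {y,{x,z}}`; that is,
`(A, {−,−})` is a Loday (left Leibniz) algebra over `K`. -/
theorem statement_2 (K : Type u) [Field K] [CharZero K] (A : Type v) [Ring A] [Algebra K A]
    (D : DoubleBracket K A) (hD : D.IsPoisson) :
    (∀ (x : A) (c : K) (a b : A), D.ab x (c • a + b) = c • D.ab x a + D.ab x b)
    ∧ (∀ x a b : A, D.ab x (a * b) = D.ab x a * b + a * D.ab x b)
    ∧ (∀ x : A, D.ab x 1 = 0)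
    ∧ (∀ x y z : A, D.ab x (D.ab y z) = D.ab (D.ab x y) z + D.ab y (D.ab x z)) :=
  statement_2_general K A D hD
end
end

section
/- Let F = K⟨x₁,…,x_m, y₁,…,y_m⟩ carry the double Poisson bracket determined by ⦃x_i,x_j⦄ = 0, ⦃y_i,y_j⦄ = 0, ⦃x_i,y_j⦄ = δ_{ij}·(1⊗1), ⦃y_i,x_j⦄ = −δ_{ij}·(1⊗1). Then the element w := Σ_{i=1}^m (x_i y_i − y_i x_i) is a noncommutative moment map for F: ⦃w, p⦄ = p⊗1 − 1⊗p for all p ∈ F. -/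
open TensorProduct

noncomputable section

universe u v w

/-- The generator `x_i` of the free algebra `K⟨x₁,…,x_m,y₁,…,y_m⟩`. -/
def genX (K : Type u) [Field K] (m : ℕ) (i : Fin m) : FreeAlgebra K (Fin m ⊕ Fin m) :=
  FreeAlgebra.ι K (Sum.inl i)

/-- The generator `y_i` of the free algebra `K⟨x₁,…,x_m,y₁,…,y_m⟩`. -/
def genY (K : Type u) [Field K] (m : ℕ) (i : Fin m) : FreeAlgebra K (Fin m ⊕ Fin m) :=
  FreeAlgebra.ι K (Sum.inr i)

/-- If `F = K⟨x₁,…,x_m,y₁,…,y_m⟩` carries the double Poisson bracket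
determined by `⦃x_i,x_j⦄ = 0`, `⦃y_i,y_j⦄ = 0`, `⦃x_i,y_j⦄ = δ_{ij}·1⊗1`,
`⦃y_i,x_j⦄ = −δ_{ij}·1⊗1`, then `w = Σᵢ (xᵢyᵢ − yᵢxᵢ)` is a noncommutative moment map:
`⦃w,p⦄ = p⊗1 − 1⊗p` for all `p ∈ F`. -/
theorem statement_5 (K : Type u) [Field K] [CharZero K] (m : ℕ) (hm : 1 ≤ m)
    (D : DoubleBracket K (FreeAlgebra K (Fin m ⊕ Fin m)))
    (hxx : ∀ i j : Fin m, D.br (genX K m i) (genX K m j) = 0)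
    (hyy : ∀ i j : Fin m, D.br (genY K m i) (genY K m j) = 0)
    (hxy : ∀ i j : Fin m, D.br (genX K m i) (genY K m j)
        = if i = j then (1 : FreeAlgebra K (Fin m ⊕ Fin m)) ⊗ₜ[K] 1 else 0)
    (hyx : ∀ i j : Fin m, D.br (genY K m i) (genX K m j)
        = if i = j then -((1 : FreeAlgebra K (Fin m ⊕ Fin m)) ⊗ₜ[K] 1) else 0)
    (hD : D.IsPoisson) :
    ∀ p : FreeAlgebra K (Fin m ⊕ Fin m),
      D.br (∑ i : Fin m, (genX K m i * genY K m i - genY K m i * genX K m i)) p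
        = p ⊗ₜ[K] (1 : FreeAlgebra K (Fin m ⊕ Fin m))
          - (1 : FreeAlgebra K (Fin m ⊕ Fin m)) ⊗ₜ[K] p := by
  classical
  set A := FreeAlgebra K (Fin m ⊕ Fin m) with hA
  set w : A := ∑ i : Fin m, (genX K m i * genY K m i - genY K m i * genX K m i) with hw
  have h1 : ∀ x : A, D.br x 1 = 0 := by
    intro x
    have h := D.leibniz x 1 1
    simp only [one_mul, LinearMap.mulLeft_one, LinearMap.mulRight_one,
      TensorProduct.map_id, LinearMap.id_coe, id_eq] at h
    exact (add_eq_left.mp h.symm)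
  -- compute D.br q w for q a generator
  have key : ∀ q : A,
      D.br w q = - (TensorProduct.comm K A A) (D.br q w) := by
    intro q
    exact D.antisymm q w
  have hwx : ∀ j : Fin m, D.br w (genX K m j)
      = genX K m j ⊗ₜ[K] (1 : A) - (1 : A) ⊗ₜ[K] genX K m j := by
    intro j
    rw [key]
    have : D.br (genX K m j) w = genX K m j ⊗ₜ[K] (1 : A) - (1 : A) ⊗ₜ[K] genX K m j := by
      rw [hw, map_sum]
      have hterm : ∀ i : Fin m,
          D.br (genX K m j) (genX K m i * genY K m i - genY K m i * genX K m i)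
          = if j = i then genX K m j ⊗ₜ[K] (1 : A) - (1 : A) ⊗ₜ[K] genX K m j else 0 := by
        intro i
        rw [map_sub, D.leibniz, D.leibniz, hxx, hxy]
        by_cases h : j = i
        · simp [h]
        · simp [h]
      rw [Finset.sum_congr rfl (fun i _ => hterm i)]
      simp
    rw [this]
    simp only [map_sub, TensorProduct.comm_tmul, neg_sub]
  have hwy : ∀ j : Fin m, D.br w (genY K m j)
      = genY K m j ⊗ₜ[K] (1 : A) - (1 : A) ⊗ₜ[K] genY K m j := by
    intro j
    rw [key]
    have : D.br (genY K m j) w = genY K m j ⊗ₜ[K] (1 : A) - (1 : A) ⊗ₜ[K] genY K m j := by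
      rw [hw, map_sum]
      have hterm : ∀ i : Fin m,
          D.br (genY K m j) (genX K m i * genY K m i - genY K m i * genX K m i)
          = if j = i then genY K m j ⊗ₜ[K] (1 : A) - (1 : A) ⊗ₜ[K] genY K m j else 0 := by
        intro i
        rw [map_sub, D.leibniz, D.leibniz, hyy, hyx]
        by_cases h : j = i
        · simp [h, TensorProduct.neg_tmul, sub_eq_add_neg, add_comm]
        · simp [h]
      rw [Finset.sum_congr rfl (fun i _ => hterm i)]
      simp
    rw [this]
    simp only [map_sub, TensorProduct.comm_tmul, neg_sub]
  intro p
  induction p using FreeAlgebra.induction with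
  | grade0 r =>
      rw [Algebra.algebraMap_eq_smul_one, map_smul, h1]
      simp only [TensorProduct.smul_tmul', TensorProduct.tmul_smul, sub_self, smul_zero]
  | grade1 i =>
      cases i with
      | inl j => exact hwx j
      | inr j => exact hwy j
  | mul a b ha hb =>
      rw [D.leibniz, ha, hb]
      simp only [map_sub, TensorProduct.map_tmul, LinearMap.mulLeft_apply,
        LinearMap.mulRight_apply, LinearMap.id_apply, mul_one, one_mul]
      abel
  | add a b ha hb =>
      rw [map_add, ha, hb]
      rw [TensorProduct.add_tmul, TensorProduct.tmul_add]
      abel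
end
end

section
/- Let (A, ⦃-,-⦄) be a double Poisson algebra and Θ a double Poisson derivation on A; set θ := m∘Θ : A → A. Then θ is a K-linear derivation of A, and for all a, b ∈ A one has θ(m(⦃a,b⦄)) − m(⦃θ(a),b⦄) − m(⦃a,θ(b)⦄) ∈ [A,A]. Consequently θ is an NC Poisson derivation of A with respect to the NC Poisson structure on A_♮ induced by the double Poisson bracket. -/
open TensorProduct

noncomputable section

universe u v w

def mu3 (K : Type u) [Field K] (A : Type v) [Ring A] [Algebra K A] :
    ((A ⊗[K] A) ⊗[K] A) →ₗ[K] A :=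
  (LinearMap.mul' K A).comp (LinearMap.rTensor A (LinearMap.mul' K A))

section lemmas
variable {K : Type u} [Field K] {A : Type v} [Ring A] [Algebra K A]

lemma mu3_tmul (x : A ⊗[K] A) (v : A) :
    mu3 K A (x ⊗ₜ[K] v) = LinearMap.mul' K A x * v := by
  simp [mu3]

lemma m_mapL (u : A) (y : A ⊗[K] A) :
    LinearMap.mul' K A
      (TensorProduct.map (LinearMap.mulLeft K u) (LinearMap.id : A →ₗ[K] A) y)
      = u * LinearMap.mul' K A y := by
  induction y using TensorProduct.induction_on with
  | zero => simp
  | tmul p q => simp [mul_assoc]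
  | add x y hx hy => simp [hx, hy, mul_add]

lemma m_mapR (v : A) (y : A ⊗[K] A) :
    LinearMap.mul' K A
      (TensorProduct.map (LinearMap.id : A →ₗ[K] A) (LinearMap.mulRight K v) y)
      = LinearMap.mul' K A y * v := by
  induction y using TensorProduct.induction_on with
  | zero => simp
  | tmul p q => simp [mul_assoc]
  | add x y hx hy => simp [hx, hy, add_mul]

lemma mu3_assoc_symm (u : A) (y : A ⊗[K] A) :
    mu3 K A ((TensorProduct.assoc K A A A).symm (u ⊗ₜ[K] y)) = u * LinearMap.mul' K A y := by
  induction y using TensorProduct.induction_on with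
  | zero => rw [TensorProduct.tmul_zero, LinearEquiv.map_zero, map_zero, map_zero, mul_zero]
  | tmul p q => simp [TensorProduct.assoc_symm_tmul, mu3_tmul, mul_assoc]
  | add x y hx hy =>
    rw [TensorProduct.tmul_add, LinearEquiv.map_add, map_add, hx, hy, map_add, mul_add]

lemma mkQ_mul_comm (u v : A) :
    (commSpan K A).mkQ (u * v) = (commSpan K A).mkQ (v * u) := by
  rw [← sub_eq_zero, ← map_sub, Submodule.mkQ_apply, Submodule.Quotient.mk_eq_zero]
  exact Submodule.subset_span ⟨u, v, rfl⟩

lemma mkQ_m_comm (x : A ⊗[K] A) :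
    (commSpan K A).mkQ (LinearMap.mul' K A ((TensorProduct.comm K A A) x))
      = (commSpan K A).mkQ (LinearMap.mul' K A x) := by
  induction x using TensorProduct.induction_on with
  | zero => simp
  | tmul u v => simpa using mkQ_mul_comm v u
  | add x y hx hy => simp [map_add, hx, hy]

lemma mkQ_mu3_cyc (z : (A ⊗[K] A) ⊗[K] A) :
    (commSpan K A).mkQ (mu3 K A (cyc K A z)) = (commSpan K A).mkQ (mu3 K A z) := by
  induction z using TensorProduct.induction_on with
  | zero => simp
  | tmul x w =>
    induction x using TensorProduct.induction_on with
    | zero => simp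
    | tmul u v =>
      have : cyc K A ((u ⊗ₜ[K] v) ⊗ₜ[K] w) = (w ⊗ₜ[K] u) ⊗ₜ[K] v := by
        simp [cyc, TensorProduct.assoc_symm_tmul]
      rw [this, mu3_tmul, mu3_tmul]
      simp only [LinearMap.mul'_apply]
      rw [mul_assoc, mkQ_mul_comm]
    | add x y hx hy =>
      rw [TensorProduct.add_tmul, map_add, map_add, map_add, map_add, hx, hy, ← map_add]
  | add x y hx hy => simp [map_add, hx, hy]

end lemmas

/-- A double Poisson derivation on a double Poisson algebra `(A, ⦃-,-⦄)`. -/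
def IsDoublePoissonDerivation {K : Type u} {A : Type v} [Field K] [Ring A] [Algebra K A]
    (D : DoubleBracket K A) (Θ : A →ₗ[K] A ⊗[K] A) : Prop :=
  (∀ a b : A, Θ (a * b)
      = (TensorProduct.map (LinearMap.mulLeft K a) (LinearMap.id : A →ₗ[K] A)) (Θ b)
        + (TensorProduct.map (LinearMap.id : A →ₗ[K] A) (LinearMap.mulRight K b)) (Θ a))
  ∧ ∀ a b : A,
      (LinearMap.rTensor A Θ) (D.br a b)
        = (TensorProduct.assoc K A A A).symm ((LinearMap.lTensor A (D.br a)) (Θ b))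
          - cyc K A (cyc K A ((LinearMap.rTensor A (D.br b)) (Θ a)))

/-- Let `(A,⦃-,-⦄)` be a double Poisson algebra and `Θ` a double Poisson
derivation; set `θ := m∘Θ`. Then `θ` is a `K`-linear derivation of `A`, and
`θ(m⦃a,b⦄) − m⦃θa,b⦄ − m⦃a,θb⦄ ∈ [A,A]` for all `a,b`. Consequently `θ` is an NC
Poisson derivation of `A` for the NC Poisson structure on `A_♮` induced by `⦃-,-⦄`. -/
theorem statement_10 (K : Type u) [Field K] [CharZero K] (A : Type v) [Ring A] [Algebra K A]
    (D : DoubleBracket K A) (hD : D.IsPoisson)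
    (Θ : A →ₗ[K] A ⊗[K] A) (hΘ : IsDoublePoissonDerivation D Θ) :
    (∀ a b : A, (LinearMap.mul' K A) (Θ (a * b))
        = (LinearMap.mul' K A) (Θ a) * b + a * (LinearMap.mul' K A) (Θ b))
    ∧ (∀ a b : A, (LinearMap.mul' K A) (Θ (D.ab a b))
        - D.ab ((LinearMap.mul' K A) (Θ a)) b - D.ab a ((LinearMap.mul' K A) (Θ b))
        ∈ commSpan K A)
    ∧ ∀ L : (A ⧸ natSub K A) →ₗ[K] (A ⧸ natSub K A) →ₗ[K] (A ⧸ natSub K A),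
        (∀ a b : A, L ((natSub K A).mkQ a) ((natSub K A).mkQ b) = (natSub K A).mkQ (D.ab a b))
        → ∃ θbar : (A ⧸ natSub K A) →ₗ[K] (A ⧸ natSub K A),
            (∀ x : A, θbar ((natSub K A).mkQ x)
                = (natSub K A).mkQ ((LinearMap.mul' K A) (Θ x)))
            ∧ ∀ α β, θbar (L α β) = L (θbar α) β + L α (θbar β) := by
  obtain ⟨hΘ1, hΘ2⟩ := hΘ
  have part1 : ∀ a b : A, (LinearMap.mul' K A) (Θ (a * b))
      = (LinearMap.mul' K A) (Θ a) * b + a * (LinearMap.mul' K A) (Θ b) := by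
    intro a b
    rw [hΘ1 a b, map_add, m_mapL, m_mapR, add_comm]
  have L1 : ∀ (a : A) (t : A ⊗[K] A),
      LinearMap.mul' K A (D.br a (LinearMap.mul' K A t))
        = mu3 K A ((TensorProduct.assoc K A A A).symm (LinearMap.lTensor A (D.br a) t))
          + mu3 K A (LinearMap.rTensor A (D.br a) t) := by
    intro a t
    have h : ((LinearMap.mul' K A).comp ((D.br a).comp (LinearMap.mul' K A)))
        = ((mu3 K A).comp (((TensorProduct.assoc K A A A).symm.toLinearMap).comp
            (LinearMap.lTensor A (D.br a))))
          + ((mu3 K A).comp (LinearMap.rTensor A (D.br a))) := by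
      apply TensorProduct.ext'
      intro u v
      simp only [LinearMap.comp_apply, LinearMap.add_apply, LinearEquiv.coe_coe,
        LinearMap.lTensor_tmul, LinearMap.rTensor_tmul, LinearMap.mul'_apply]
      rw [D.leibniz a u v, map_add, m_mapL, m_mapR, mu3_assoc_symm, mu3_tmul, add_comm]
    have ht := LinearMap.congr_fun h t
    simpa only [LinearMap.comp_apply, LinearMap.add_apply, LinearEquiv.coe_coe] using ht
  have L2 : ∀ t : A ⊗[K] A,
      (commSpan K A).mkQ (LinearMap.mul' K A (Θ (LinearMap.mul' K A t)))
        = (commSpan K A).mkQ (mu3 K A (LinearMap.rTensor A Θ t))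
          + (commSpan K A).mkQ (mu3 K A (LinearMap.rTensor A Θ ((TensorProduct.comm K A A) t))) := by
    intro t
    have h : (((commSpan K A).mkQ.comp (LinearMap.mul' K A)).comp
          (Θ.comp (LinearMap.mul' K A)))
        = ((commSpan K A).mkQ.comp (mu3 K A)).comp (LinearMap.rTensor A Θ)
          + (((commSpan K A).mkQ.comp (mu3 K A)).comp
              ((LinearMap.rTensor A Θ).comp (TensorProduct.comm K A A).toLinearMap)) := by
      apply TensorProduct.ext'
      intro u v
      simp only [LinearMap.comp_apply, LinearMap.add_apply, LinearEquiv.coe_coe,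
        TensorProduct.comm_tmul, LinearMap.rTensor_tmul, LinearMap.mul'_apply]
      rw [part1 u v, map_add, mu3_tmul, mu3_tmul]
      congr 1
      exact mkQ_mul_comm u _
    have ht := LinearMap.congr_fun h t
    simpa only [LinearMap.comp_apply, LinearMap.add_apply, LinearEquiv.coe_coe] using ht
  have hF : ∀ x y : A,
      (commSpan K A).mkQ (mu3 K A (LinearMap.rTensor A Θ (D.br x y)))
        = (commSpan K A).mkQ (LinearMap.mul' K A (D.br x (LinearMap.mul' K A (Θ y))))
          - (commSpan K A).mkQ (mu3 K A (LinearMap.rTensor A (D.br x) (Θ y)))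
          - (commSpan K A).mkQ (mu3 K A (LinearMap.rTensor A (D.br y) (Θ x))) := by
    intro x y
    have e : mu3 K A ((TensorProduct.assoc K A A A).symm (LinearMap.lTensor A (D.br x) (Θ y)))
        = LinearMap.mul' K A (D.br x (LinearMap.mul' K A (Θ y)))
          - mu3 K A (LinearMap.rTensor A (D.br x) (Θ y)) :=
      eq_sub_of_add_eq (L1 x (Θ y)).symm
    rw [hΘ2 x y, map_sub, map_sub, mkQ_mu3_cyc, mkQ_mu3_cyc, e, map_sub]
  have key : ∀ a b : A,
      (commSpan K A).mkQ (LinearMap.mul' K A (Θ (LinearMap.mul' K A (D.br a b))))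
        = (commSpan K A).mkQ (LinearMap.mul' K A (D.br (LinearMap.mul' K A (Θ a)) b))
          + (commSpan K A).mkQ (LinearMap.mul' K A (D.br a (LinearMap.mul' K A (Θ b)))) := by
    intro a b
    have haskew : (TensorProduct.comm K A A) (D.br a b) = - D.br b a := by
      rw [D.antisymm a b, neg_neg]
    have hba : D.br b (LinearMap.mul' K A (Θ a))
        = - (TensorProduct.comm K A A) (D.br (LinearMap.mul' K A (Θ a)) b) :=
      D.antisymm (LinearMap.mul' K A (Θ a)) b
    rw [L2 (D.br a b), haskew, map_neg, map_neg, map_neg, hF a b, hF b a, hba,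
      map_neg, map_neg, mkQ_m_comm]
    abel
  have part2 : ∀ a b : A, (LinearMap.mul' K A) (Θ (D.ab a b))
      - D.ab ((LinearMap.mul' K A) (Θ a)) b - D.ab a ((LinearMap.mul' K A) (Θ b))
      ∈ commSpan K A := by
    intro a b
    have h := key a b
    have h0 : (commSpan K A).mkQ ((LinearMap.mul' K A) (Θ (D.ab a b))
        - D.ab ((LinearMap.mul' K A) (Θ a)) b - D.ab a ((LinearMap.mul' K A) (Θ b))) = 0 := by
      simp only [DoubleBracket.ab, map_sub, h]
      abel
    rwa [Submodule.mkQ_apply, Submodule.Quotient.mk_eq_zero] at h0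
  refine ⟨part1, part2, ?_⟩
  intro L hL
  have hcs : commSpan K A ≤ natSub K A := le_sup_right
  have hθ1 : Θ 1 = 0 := by
    have h := hΘ1 1 1
    simp only [mul_one, LinearMap.mulLeft_one, LinearMap.mulRight_one,
      TensorProduct.map_id, LinearMap.id_coe, id_eq] at h
    exact (left_eq_add.mp h)
  have hle : natSub K A ≤ Submodule.comap ((LinearMap.mul' K A) ∘ₗ Θ) (natSub K A) := by
    apply sup_le
    · rw [Submodule.span_le]
      rintro x hx
      simp only [Set.mem_singleton_iff] at hx
      subst hx
      simp only [SetLike.mem_coe, Submodule.mem_comap, LinearMap.comp_apply, hθ1, map_zero]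
      exact (natSub K A).zero_mem
    · rw [commSpan, Submodule.span_le]
      rintro z ⟨u, v, rfl⟩
      simp only [SetLike.mem_coe, Submodule.mem_comap, LinearMap.comp_apply, map_sub]
      have e : LinearMap.mul' K A (Θ (u*v)) - LinearMap.mul' K A (Θ (v*u))
          = (LinearMap.mul' K A (Θ u) * v - v * LinearMap.mul' K A (Θ u))
            + (u * LinearMap.mul' K A (Θ v) - LinearMap.mul' K A (Θ v) * u) := by
        rw [part1 u v, part1 v u]; abel
      rw [e]
      refine hcs (add_mem ?_ ?_) <;> exact Submodule.subset_span ⟨_, _, rfl⟩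
  refine ⟨Submodule.mapQ (natSub K A) (natSub K A) ((LinearMap.mul' K A) ∘ₗ Θ) hle, ?_, ?_⟩
  · intro x
    rw [Submodule.mkQ_apply, Submodule.mapQ_apply, LinearMap.comp_apply, Submodule.mkQ_apply]
  · intro α β
    obtain ⟨a, rfl⟩ := Submodule.mkQ_surjective _ α
    obtain ⟨b, rfl⟩ := Submodule.mkQ_surjective _ β
    have hmap : ∀ x : A,
        Submodule.mapQ (natSub K A) (natSub K A) ((LinearMap.mul' K A) ∘ₗ Θ) hle
          ((natSub K A).mkQ x) = (natSub K A).mkQ (LinearMap.mul' K A (Θ x)) := by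
      intro x
      rw [Submodule.mkQ_apply, Submodule.mapQ_apply, LinearMap.comp_apply, Submodule.mkQ_apply]
    rw [hL a b, hmap, hmap a, hmap b, hL, hL]
    rw [← map_add, ← sub_eq_zero, ← map_sub, Submodule.mkQ_apply, Submodule.Quotient.mk_eq_zero]
    have e : LinearMap.mul' K A (Θ (D.ab a b))
        - (D.ab (LinearMap.mul' K A (Θ a)) b + D.ab a (LinearMap.mul' K A (Θ b)))
        = LinearMap.mul' K A (Θ (D.ab a b)) - D.ab (LinearMap.mul' K A (Θ a)) b
          - D.ab a (LinearMap.mul' K A (Θ b)) := by abel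
    rw [e]
    exact hcs (part2 a b)
end
end

section
/- Let (A, ⦃-,-⦄) be a double Poisson algebra with a moment map w, I = AwA, B = A/I, and let Θ be a double Poisson derivation on A such that Θ(w) ∈ A⊗I + I⊗A (the K-linear span of elementary tensors having at least one factor in I). Set θ := m∘Θ. Then θ(I) ⊆ I, so θ induces a K-linear derivation θ̄ of B; moreover θ(m(⦃a,b⦄)) − m(⦃θ(a),b⦄) − m(⦃a,θ(b)⦄) ∈ I + [A,A] for all a, b ∈ A, so the induced map of θ̄ on B/[B,B] is a derivation of the reduced Lie bracket on B/[B,B] (the unique Lie bracket making the surjection A/[A,A] → B/[B,B] a Lie algebra morphism). -/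
open TensorProduct

noncomputable section

universe u v w

/-- The two-sided ideal `AwA` generated by `w`, as a `K`-submodule of `A`. -/
def wIdeal (K : Type u) [Field K] {A : Type v} [Ring A] [Algebra K A] (w : A) : Submodule K A :=
  Submodule.span K {z : A | ∃ a b : A, z = a * w * b}

/-- `A⊗I + I⊗A`: the `K`-linear span of elementary tensors with at least one factor in `I`. -/
def mixedTensorSub (K : Type u) [Field K] {A : Type v} [Ring A] [Algebra K A]
    (I : Submodule K A) : Submodule K (A ⊗[K] A) :=
  Submodule.span K {z : A ⊗[K] A |
    (∃ a b : A, b ∈ I ∧ z = a ⊗ₜ[K] b) ∨ (∃ a b : A, a ∈ I ∧ z = a ⊗ₜ[K] b)}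
namespace St11Aux

variable (K : Type u) [Field K] (A : Type v) [Ring A] [Algebra K A]

/-- Multiplication of three factors `(x⊗y)⊗z ↦ xyz`. -/
def m3 : (A ⊗[K] A) ⊗[K] A →ₗ[K] A :=
  (LinearMap.mul' K A) ∘ₗ (LinearMap.rTensor A (LinearMap.mul' K A))

/-- Multiplication of three factors `x⊗(y⊗z) ↦ xyz`. -/
def m3' : A ⊗[K] (A ⊗[K] A) →ₗ[K] A :=
  (LinearMap.mul' K A) ∘ₗ (LinearMap.lTensor A (LinearMap.mul' K A))

lemma m3_tmul (t : A ⊗[K] A) (z : A) :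
    m3 K A (t ⊗ₜ[K] z) = LinearMap.mul' K A t * z := by
  simp [m3]

lemma m3'_tmul (x : A) (t : A ⊗[K] A) :
    m3' K A (x ⊗ₜ[K] t) = x * LinearMap.mul' K A t := by
  simp [m3']

lemma comm_mem (u v : A) : u * v - v * u ∈ commSpan K A :=
  Submodule.subset_span ⟨u, v, rfl⟩

lemma q_mul_comm (u v : A) :
    (commSpan K A).mkQ (u * v) = (commSpan K A).mkQ (v * u) := by
  rw [Submodule.mkQ_apply, Submodule.mkQ_apply, Submodule.Quotient.eq]
  exact comm_mem K A u v

lemma lemA : (commSpan K A).mkQ ∘ₗ m3 K A ∘ₗ cyc K A = (commSpan K A).mkQ ∘ₗ m3 K A := by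
  ext x y z
  simp only [LinearMap.coe_comp, Function.comp_apply, cyc, LinearEquiv.coe_coe,
    AlgebraTensorModule.curry_apply, curry_apply, LinearMap.coe_restrictScalars,
    TensorProduct.comm_tmul, TensorProduct.assoc_symm_tmul, m3, LinearMap.rTensor_tmul,
    LinearMap.mul'_apply]
  rw [mul_assoc z x y, q_mul_comm, mul_assoc]

lemma lemA_ap (s : (A ⊗[K] A) ⊗[K] A) :
    (commSpan K A).mkQ (m3 K A (cyc K A s)) = (commSpan K A).mkQ (m3 K A s) :=
  LinearMap.congr_fun (lemA K A) s

lemma lemB_ap (s : A ⊗[K] A) :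
    (commSpan K A).mkQ (LinearMap.mul' K A ((TensorProduct.comm K A A) s))
      = (commSpan K A).mkQ (LinearMap.mul' K A s) := by
  have h : (commSpan K A).mkQ ∘ₗ (LinearMap.mul' K A) ∘ₗ (TensorProduct.comm K A A).toLinearMap
      = (commSpan K A).mkQ ∘ₗ LinearMap.mul' K A := by
    ext u v
    simp only [LinearMap.coe_comp, Function.comp_apply, LinearEquiv.coe_coe,
      AlgebraTensorModule.curry_apply, curry_apply, LinearMap.coe_restrictScalars,
      TensorProduct.comm_tmul, LinearMap.mul'_apply]
    exact q_mul_comm K A v u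
  exact LinearMap.congr_fun h s

lemma lemE_ap (s : A ⊗[K] (A ⊗[K] A)) :
    (commSpan K A).mkQ (m3' K A s)
      = (commSpan K A).mkQ (m3 K A ((TensorProduct.comm K A (A ⊗[K] A)) s)) := by
  have h : (commSpan K A).mkQ ∘ₗ m3' K A
      = (commSpan K A).mkQ ∘ₗ m3 K A ∘ₗ (TensorProduct.comm K A (A ⊗[K] A)).toLinearMap := by
    ext x y z
    simp only [LinearMap.coe_comp, Function.comp_apply, LinearEquiv.coe_coe,
      AlgebraTensorModule.curry_apply, curry_apply, LinearMap.coe_restrictScalars,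
      TensorProduct.comm_tmul, m3, m3', LinearMap.rTensor_tmul, LinearMap.lTensor_tmul,
      LinearMap.mul'_apply]
    exact q_mul_comm K A x (y * z)
  exact LinearMap.congr_fun h s

lemma lemH : m3 K A ∘ₗ (TensorProduct.assoc K A A A).symm.toLinearMap = m3' K A := by
  ext x y z
  simp only [LinearMap.coe_comp, Function.comp_apply, LinearEquiv.coe_coe,
    AlgebraTensorModule.curry_apply, curry_apply, LinearMap.coe_restrictScalars,
    TensorProduct.assoc_symm_tmul, m3, m3', LinearMap.rTensor_tmul, LinearMap.lTensor_tmul,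
    LinearMap.mul'_apply, mul_assoc]

lemma lemF (f : A →ₗ[K] A ⊗[K] A) :
    (TensorProduct.comm K A (A ⊗[K] A)).toLinearMap ∘ₗ LinearMap.lTensor A f
      = LinearMap.rTensor A f ∘ₗ (TensorProduct.comm K A A).toLinearMap := by
  ext x y
  simp

lemma m2_mapL (x : A) (t : A ⊗[K] A) :
    LinearMap.mul' K A
        ((TensorProduct.map (LinearMap.mulLeft K x) (LinearMap.id : A →ₗ[K] A)) t)
      = x * LinearMap.mul' K A t := by
  have h : (LinearMap.mul' K A) ∘ₗ
        (TensorProduct.map (LinearMap.mulLeft K x) (LinearMap.id : A →ₗ[K] A))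
      = (LinearMap.mulLeft K x) ∘ₗ LinearMap.mul' K A := by
    ext u v
    simp [mul_assoc]
  simpa using LinearMap.congr_fun h t

lemma m2_mapR (y : A) (t : A ⊗[K] A) :
    LinearMap.mul' K A
        ((TensorProduct.map (LinearMap.id : A →ₗ[K] A) (LinearMap.mulRight K y)) t)
      = LinearMap.mul' K A t * y := by
  have h : (LinearMap.mul' K A) ∘ₗ
        (TensorProduct.map (LinearMap.id : A →ₗ[K] A) (LinearMap.mulRight K y))
      = (LinearMap.mulRight K y) ∘ₗ LinearMap.mul' K A := by
    ext u v
    simp [mul_assoc]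
  simpa using LinearMap.congr_fun h t



lemma lemD (Θ : A →ₗ[K] A ⊗[K] A)
    (hmul : ∀ a b : A, Θ (a * b)
      = (TensorProduct.map (LinearMap.mulLeft K a) (LinearMap.id : A →ₗ[K] A)) (Θ b)
        + (TensorProduct.map (LinearMap.id : A →ₗ[K] A) (LinearMap.mulRight K b)) (Θ a)) :
    (LinearMap.mul' K A ∘ₗ Θ) ∘ₗ LinearMap.mul' K A
      = m3 K A ∘ₗ LinearMap.rTensor A Θ + m3' K A ∘ₗ LinearMap.lTensor A Θ := by
  ext x y
  simp only [LinearMap.coe_comp, Function.comp_apply, AlgebraTensorModule.curry_apply,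
    curry_apply, LinearMap.coe_restrictScalars, LinearMap.add_apply, LinearMap.rTensor_tmul,
    LinearMap.lTensor_tmul, LinearMap.mul'_apply]
  rw [hmul x y, map_add, m2_mapL, m2_mapR, m3_tmul, m3'_tmul]
  exact add_comm _ _

lemma lemG (D : DoubleBracket K A) (c : A) :
    LinearMap.mul' K A ∘ₗ (D.br c) ∘ₗ LinearMap.mul' K A
      = m3' K A ∘ₗ LinearMap.lTensor A (D.br c) + m3 K A ∘ₗ LinearMap.rTensor A (D.br c) := by
  ext x y
  simp only [LinearMap.coe_comp, Function.comp_apply, AlgebraTensorModule.curry_apply,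
    curry_apply, LinearMap.coe_restrictScalars, LinearMap.add_apply, LinearMap.rTensor_tmul,
    LinearMap.lTensor_tmul, LinearMap.mul'_apply]
  rw [D.leibniz c x y, map_add, m2_mapL, m2_mapR, m3_tmul, m3'_tmul]

lemma part3 (D : DoubleBracket K A) (Θ : A →ₗ[K] A ⊗[K] A)
    (hmul : ∀ a b : A, Θ (a * b)
      = (TensorProduct.map (LinearMap.mulLeft K a) (LinearMap.id : A →ₗ[K] A)) (Θ b)
        + (TensorProduct.map (LinearMap.id : A →ₗ[K] A) (LinearMap.mulRight K b)) (Θ a))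
    (hder : ∀ a b : A,
      (LinearMap.rTensor A Θ) (D.br a b)
        = (TensorProduct.assoc K A A A).symm ((LinearMap.lTensor A (D.br a)) (Θ b))
          - cyc K A (cyc K A ((LinearMap.rTensor A (D.br b)) (Θ a))))
    (a b : A) :
    LinearMap.mul' K A (Θ (D.ab a b))
      - D.ab (LinearMap.mul' K A (Θ a)) b - D.ab a (LinearMap.mul' K A (Θ b))
      ∈ commSpan K A := by
  have hmem : ∀ x : A, (commSpan K A).mkQ x = 0 → x ∈ commSpan K A := fun x hx => by
    rwa [Submodule.mkQ_apply, Submodule.Quotient.mk_eq_zero] at hx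
  apply hmem
  set q := (commSpan K A).mkQ with hqdef
  set X1 := q (m3' K A (LinearMap.lTensor A (D.br a) (Θ b))) with hX1
  set Y1 := q (m3 K A (LinearMap.rTensor A (D.br a) (Θ b))) with hY1
  set X2 := q (m3' K A (LinearMap.lTensor A (D.br b) (Θ a))) with hX2
  set Y2 := q (m3 K A (LinearMap.rTensor A (D.br b) (Θ a))) with hY2
  -- h3
  have h3 : q (m3 K A (LinearMap.rTensor A Θ (D.br a b))) = X1 - Y2 := by
    rw [hder a b, map_sub, map_sub]
    congr 1
    · rw [hX1]
      congr 1
      exact LinearMap.congr_fun (lemH K A) (LinearMap.lTensor A (D.br a) (Θ b))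
    · rw [lemA_ap, lemA_ap, hY2]
  have h4 : q (m3 K A (LinearMap.rTensor A Θ (D.br b a))) = X2 - Y1 := by
    rw [hder b a, map_sub, map_sub]
    congr 1
    · rw [hX2]
      congr 1
      exact LinearMap.congr_fun (lemH K A) (LinearMap.lTensor A (D.br b) (Θ a))
    · rw [lemA_ap, lemA_ap, hY1]
  -- h2
  have hcomm : (TensorProduct.comm K A A) (D.br a b) = - D.br b a := by
    rw [D.antisymm a b, neg_neg]
  have h2 : q (m3' K A (LinearMap.lTensor A Θ (D.br a b))) = -(X2 - Y1) := by
    rw [lemE_ap]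
    have hf := LinearMap.congr_fun (lemF K A Θ) (D.br a b)
    simp only [LinearMap.coe_comp, Function.comp_apply, LinearEquiv.coe_coe] at hf
    rw [hf, hcomm, map_neg, map_neg, map_neg, h4]
  -- h1
  have h1 : q (LinearMap.mul' K A (Θ (LinearMap.mul' K A (D.br a b))))
      = (X1 - Y2) + -(X2 - Y1) := by
    have hd := LinearMap.congr_fun (lemD K A Θ hmul) (D.br a b)
    simp only [LinearMap.coe_comp, Function.comp_apply, LinearMap.add_apply] at hd
    rw [hd, map_add, h3, h2]
  -- h5
  have h5 : q (LinearMap.mul' K A (D.br a (LinearMap.mul' K A (Θ b)))) = X1 + Y1 := by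
    have hg := LinearMap.congr_fun (lemG K A D a) (Θ b)
    simp only [LinearMap.coe_comp, Function.comp_apply, LinearMap.add_apply] at hg
    rw [hg, map_add]
  -- h6
  have h6 : q (LinearMap.mul' K A (D.br (LinearMap.mul' K A (Θ a)) b)) = -(X2 + Y2) := by
    rw [D.antisymm b (LinearMap.mul' K A (Θ a)), map_neg, map_neg, lemB_ap]
    have hg := LinearMap.congr_fun (lemG K A D b) (Θ a)
    simp only [LinearMap.coe_comp, Function.comp_apply, LinearMap.add_apply] at hg
    rw [hg, map_add]
  simp only [DoubleBracket.ab]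
  rw [map_sub, map_sub, h1, h5, h6]
  abel



lemma wIdeal_mul_left (w c : A) {x : A} (hx : x ∈ wIdeal K w) : c * x ∈ wIdeal K w := by
  induction hx using Submodule.span_induction with
  | mem z hz =>
    obtain ⟨p, q, rfl⟩ := hz
    exact Submodule.subset_span ⟨c * p, q, by simp [mul_assoc]⟩
  | zero => simpa using (wIdeal K w).zero_mem
  | add x y _ _ hx hy => rw [mul_add]; exact add_mem hx hy
  | smul r x _ hx => rw [mul_smul_comm]; exact Submodule.smul_mem _ r hx

lemma wIdeal_mul_right (w c : A) {x : A} (hx : x ∈ wIdeal K w) : x * c ∈ wIdeal K w := by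
  induction hx using Submodule.span_induction with
  | mem z hz =>
    obtain ⟨p, q, rfl⟩ := hz
    exact Submodule.subset_span ⟨p, q * c, by simp [mul_assoc]⟩
  | zero => simpa using (wIdeal K w).zero_mem
  | add x y _ _ hx hy => rw [add_mul]; exact add_mem hx hy
  | smul r x _ hx => rw [smul_mul_assoc]; exact Submodule.smul_mem _ r hx

lemma m2_mixed (w : A) {t : A ⊗[K] A} (ht : t ∈ mixedTensorSub K (wIdeal K w)) :
    LinearMap.mul' K A t ∈ wIdeal K w := by
  induction ht using Submodule.span_induction with
  | mem z hz =>
    rcases hz with ⟨p, q, hq, rfl⟩ | ⟨p, q, hp, rfl⟩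
    · simpa [LinearMap.mul'_apply] using wIdeal_mul_left K A w p hq
    · simpa [LinearMap.mul'_apply] using wIdeal_mul_right K A w q hp
  | zero => simpa using (wIdeal K w).zero_mem
  | add x y _ _ hx hy => rw [map_add]; exact add_mem hx hy
  | smul r x _ hx => rw [map_smul]; exact Submodule.smul_mem _ r hx

lemma theta_mul (Θ : A →ₗ[K] A ⊗[K] A)
    (hmul : ∀ a b : A, Θ (a * b)
      = (TensorProduct.map (LinearMap.mulLeft K a) (LinearMap.id : A →ₗ[K] A)) (Θ b)
        + (TensorProduct.map (LinearMap.id : A →ₗ[K] A) (LinearMap.mulRight K b)) (Θ a))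
    (x y : A) :
    LinearMap.mul' K A (Θ (x * y))
      = x * LinearMap.mul' K A (Θ y) + LinearMap.mul' K A (Θ x) * y := by
  rw [hmul x y, map_add, m2_mapL, m2_mapR]

lemma part1 (w : A) (Θ : A →ₗ[K] A ⊗[K] A)
    (hmul : ∀ a b : A, Θ (a * b)
      = (TensorProduct.map (LinearMap.mulLeft K a) (LinearMap.id : A →ₗ[K] A)) (Θ b)
        + (TensorProduct.map (LinearMap.id : A →ₗ[K] A) (LinearMap.mulRight K b)) (Θ a))
    (hΘw : Θ w ∈ mixedTensorSub K (wIdeal K w)) :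
    ∀ x : A, x ∈ wIdeal K w → LinearMap.mul' K A (Θ x) ∈ wIdeal K w := by
  intro x hx
  induction hx using Submodule.span_induction with
  | mem z hz =>
    obtain ⟨p, q, rfl⟩ := hz
    rw [theta_mul K A Θ hmul (p * w) q, theta_mul K A Θ hmul p w, add_mul]
    refine add_mem (Submodule.subset_span ⟨p, _, rfl⟩) (add_mem ?_ ?_)
    · exact wIdeal_mul_right K A w q (wIdeal_mul_left K A w p (m2_mixed K A w hΘw))
    · exact Submodule.subset_span ⟨_, q, rfl⟩
  | zero => simpa using (wIdeal K w).zero_mem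
  | add x y _ _ hx hy => rw [map_add, map_add]; exact add_mem hx hy
  | smul r x _ hx => rw [map_smul, map_smul]; exact Submodule.smul_mem _ r hx

lemma map_commSpan (B : Type w) [Ring B] [Algebra K B] (φ : A →ₐ[K] B)
    {c : A} (hc : c ∈ commSpan K A) : φ c ∈ commSpan K B := by
  induction hc using Submodule.span_induction with
  | mem z hz =>
    obtain ⟨u, v, rfl⟩ := hz
    rw [map_sub, map_mul, map_mul]
    exact comm_mem K B _ _
  | zero => simpa using (commSpan K B).zero_mem
  | add x y _ _ hx hy => rw [map_add]; exact add_mem hx hy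
  | smul r x _ hx => rw [map_smul]; exact Submodule.smul_mem _ r hx

end St11Aux

/-- Let `(A,⦃-,-⦄)` be a double Poisson algebra with moment map `w`,
`I = AwA`, `B = A/I`, and let `Θ` be a double Poisson derivation with
`Θ(w) ∈ A⊗I + I⊗A`; set `θ := m∘Θ`. Then `θ(I) ⊆ I`, so `θ` induces a `K`-linear
derivation `θ̄` of `B`; moreover `θ(m⦃a,b⦄) − m⦃θa,b⦄ − m⦃a,θb⦄ ∈ I + [A,A]` for all
`a,b ∈ A`, so the map induced by `θ̄` on `B/[B,B]` is a derivation of the reduced Lie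
bracket (the unique Lie bracket making `A/[A,A] → B/[B,B]` a Lie algebra morphism). -/
theorem statement_11 (K : Type u) [Field K] [CharZero K] (A : Type v) [Ring A] [Algebra K A]
    (D : DoubleBracket K A) (hD : D.IsPoisson)
    (w : A) (hw : ∀ p : A, D.br w p = p ⊗ₜ[K] (1 : A) - (1 : A) ⊗ₜ[K] p)
    (B : Type w) [Ring B] [Algebra K B]
    (φ : A →ₐ[K] B) (hφ : Function.Surjective φ)
    (hker : LinearMap.ker φ.toLinearMap = wIdeal K w)
    (Θ : A →ₗ[K] A ⊗[K] A) (hΘ : IsDoublePoissonDerivation D Θ)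
    (hΘw : Θ w ∈ mixedTensorSub K (wIdeal K w)) :
    (∀ x : A, x ∈ wIdeal K w → (LinearMap.mul' K A) (Θ x) ∈ wIdeal K w)
    ∧ (∃ θbar : B →ₗ[K] B,
        (∀ a : A, θbar (φ a) = φ ((LinearMap.mul' K A) (Θ a)))
        ∧ ∀ u v : B, θbar (u * v) = θbar u * v + u * θbar v)
    ∧ (∀ a b : A, (LinearMap.mul' K A) (Θ (D.ab a b))
        - D.ab ((LinearMap.mul' K A) (Θ a)) b - D.ab a ((LinearMap.mul' K A) (Θ b))
        ∈ wIdeal K w ⊔ commSpan K A)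
    ∧ ∀ θbar : B →ₗ[K] B,
        (∀ a : A, θbar (φ a) = φ ((LinearMap.mul' K A) (Θ a))) →
        ∀ L : (B ⧸ commSpan K B) →ₗ[K] (B ⧸ commSpan K B) →ₗ[K] (B ⧸ commSpan K B),
          (∀ x y : A, L ((commSpan K B).mkQ (φ x)) ((commSpan K B).mkQ (φ y))
              = (commSpan K B).mkQ (φ (D.ab x y))) →
          ∃ θc : (B ⧸ commSpan K B) →ₗ[K] (B ⧸ commSpan K B),
            (∀ u : B, θc ((commSpan K B).mkQ u) = (commSpan K B).mkQ (θbar u))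
            ∧ ∀ α β, θc (L α β) = L (θc α) β + L α (θc β) := by
  obtain ⟨hmul, hder⟩ := hΘ
  have hpart1 : ∀ x : A, x ∈ wIdeal K w → LinearMap.mul' K A (Θ x) ∈ wIdeal K w :=
    St11Aux.part1 K A w Θ hmul hΘw
  have hp3 : ∀ a b : A, LinearMap.mul' K A (Θ (D.ab a b))
      - D.ab (LinearMap.mul' K A (Θ a)) b - D.ab a (LinearMap.mul' K A (Θ b))
      ∈ commSpan K A := St11Aux.part3 K A D Θ hmul hder
  -- construction of θbar
  have hkerθ : LinearMap.ker φ.toLinearMap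
      ≤ LinearMap.ker (φ.toLinearMap ∘ₗ (LinearMap.mul' K A ∘ₗ Θ)) := by
    intro x hx
    have hx' : x ∈ wIdeal K w := by rw [← hker]; exact hx
    have h1 : LinearMap.mul' K A (Θ x) ∈ LinearMap.ker φ.toLinearMap := by
      rw [hker]; exact hpart1 x hx'
    simpa only [LinearMap.mem_ker, LinearMap.comp_apply] using h1
  set lift := (LinearMap.ker φ.toLinearMap).liftQ
      (φ.toLinearMap ∘ₗ (LinearMap.mul' K A ∘ₗ Θ)) hkerθ with hlift
  set e := φ.toLinearMap.quotKerEquivOfSurjective hφ with he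
  set θbar : B →ₗ[K] B := lift ∘ₗ e.symm.toLinearMap with hθbardef
  have hemk : ∀ a : A, e (Submodule.Quotient.mk a) = φ a := fun a => rfl
  have hθbar : ∀ a : A, θbar (φ a) = φ (LinearMap.mul' K A (Θ a)) := by
    intro a
    have hsymm : e.symm (φ a) = Submodule.Quotient.mk a := by
      rw [LinearEquiv.symm_apply_eq, hemk]
    show lift (e.symm (φ a)) = _
    rw [hsymm, hlift, Submodule.liftQ_apply]
    rfl
  have hθmulA : ∀ x y : A, LinearMap.mul' K A (Θ (x * y))
      = x * LinearMap.mul' K A (Θ y) + LinearMap.mul' K A (Θ x) * y :=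
    St11Aux.theta_mul K A Θ hmul
  have hbarder : ∀ θb : B →ₗ[K] B,
      (∀ a : A, θb (φ a) = φ (LinearMap.mul' K A (Θ a))) →
      ∀ u v : B, θb (u * v) = θb u * v + u * θb v := by
    intro θb hθb u v
    obtain ⟨x, rfl⟩ := hφ u
    obtain ⟨y, rfl⟩ := hφ v
    rw [← map_mul, hθb, hθmulA, map_add, map_mul, map_mul, hθb, hθb]
    exact add_comm _ _
  refine ⟨hpart1, ⟨θbar, hθbar, hbarder θbar hθbar⟩,
    fun a b => Submodule.mem_sup_right (hp3 a b), ?_⟩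
  intro θb hθb L hL
  have hder' := hbarder θb hθb
  have hmaps : commSpan K B ≤ LinearMap.ker ((commSpan K B).mkQ ∘ₗ θb) := by
    rw [commSpan, Submodule.span_le]
    rintro z ⟨u, v, rfl⟩
    simp only [SetLike.mem_coe, LinearMap.mem_ker, LinearMap.comp_apply,
      Submodule.mkQ_apply, Submodule.Quotient.mk_eq_zero]
    rw [map_sub, hder' u v, hder' v u]
    have hre : (θb u * v + u * θb v) - (θb v * u + v * θb u)
        = (θb u * v - v * θb u) + (u * θb v - θb v * u) := by abel
    rw [hre]
    exact add_mem (St11Aux.comm_mem K B _ _) (St11Aux.comm_mem K B _ _)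
  set θc := (commSpan K B).liftQ ((commSpan K B).mkQ ∘ₗ θb) hmaps with hθcdef
  have hθc : ∀ u : B, θc ((commSpan K B).mkQ u) = (commSpan K B).mkQ (θb u) := by
    intro u
    rw [hθcdef, Submodule.mkQ_apply, Submodule.liftQ_apply]
    rfl
  refine ⟨θc, hθc, ?_⟩
  intro α β
  obtain ⟨u, rfl⟩ := Submodule.mkQ_surjective _ α
  obtain ⟨x, rfl⟩ := hφ u
  obtain ⟨v', rfl⟩ := Submodule.mkQ_surjective _ β
  obtain ⟨y, rfl⟩ := hφ v'
  rw [hL x y, hθc, hθc, hθc, hθb, hθb, hθb,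
    hL (LinearMap.mul' K A (Θ x)) y, hL x (LinearMap.mul' K A (Θ y))]
  have h0 : (commSpan K B).mkQ (φ (LinearMap.mul' K A (Θ (D.ab x y))
      - D.ab (LinearMap.mul' K A (Θ x)) y - D.ab x (LinearMap.mul' K A (Θ y)))) = 0 := by
    rw [Submodule.mkQ_apply, Submodule.Quotient.mk_eq_zero]
    exact St11Aux.map_commSpan K A B φ (hp3 x y)
  rw [map_sub, map_sub, map_sub, map_sub, sub_sub, sub_eq_zero] at h0
  exact h0
end
end

section
/- Let A be an associative unital K-algebra and n a positive integer. For every associative unital K-algebra B there is a bijection Φ_B : Hom_{Alg_K}(A, Mₙ(B)) → Hom_{Alg_K}(ⁿ√A, B), defined as follows: given f : A → Mₙ(B), the universal property of the coproduct yields a K-algebra homomorphism F : A ∗ Mₙ(K) → Mₙ(B) with F∘ι_A = f and F∘ι_M equal to the canonical inclusion Mₙ(K) → Mₙ(B); F maps ⁿ√A into the centralizer of Mₙ(K) in Mₙ(B), which consists of the scalar matrices b·1ₙ and is identified with B, and Φ_B(f) : ⁿ√A → B is the resulting homomorphism. Moreover Φ is natural in B: for every K-algebra homomorphism h : B → B′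 and every f : A → Mₙ(B), one has Φ_{B′}(Mₙ(h)∘f) = h∘Φ_B(f). -/
noncomputable section

universe u v

/-- The `n`-th root algebra `ⁿ√A`: the centralizer of `Mₙ(K)` in the free product
`A ∗ Mₙ(K)` (here presented by an algebra `P` with structure maps `ιA`, `ιM`). -/
def rootAlg {K : Type u} [Field K] {n : ℕ} {P : Type v} [Ring P] [Algebra K P]
    (ιM : Matrix (Fin n) (Fin n) K →ₐ[K] P) : Subalgebra K P :=
  Subalgebra.centralizer K (Set.range ⇑ιM)

/-!
The matrix units `eᵢⱼ = ιM Eᵢⱼ` exhibit `P` as a matrix algebra over the centralizer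
`R = ⁿ√A`: the elements `πᵢⱼ p = ∑ₖ eₖᵢ p eⱼₖ` lie in `R`, and `p ↦ (πᵢⱼ p)ᵢⱼ` is an
algebra map `π : P → Mₙ(R)` which is the scalar inclusion on `Mₙ(K)` and satisfies
`πᵢᵢ r = r` on `R`. So `g : R → B` yields `Mₙ(g) ∘ π ∘ ιA : A → Mₙ(B)`. Conversely, an
algebra map `F : P → Mₙ(B)` fixing the matrix units satisfies `F (πᵢⱼ p) = (F p)ᵢⱼ • 1`,
so `F` sends `R` to scalar matrices and `Φ f` reads off a diagonal entry of `F`. By the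
uniqueness in the universal property of `P` the two constructions are mutually inverse.
-/

open Matrix

namespace RootAlgebra

section MatrixUnits

variable {K : Type*} [CommSemiring K] {ι : Type*} [Fintype ι] [DecidableEq ι]
  {P : Type*} [Semiring P] [Algebra K P] (ιM : Matrix ι ι K →ₐ[K] P)

def matrixUnit (i j : ι) : P := ιM (single i j 1)

theorem matrixUnit_mul_matrixUnit (i j k l : ι) :
    matrixUnit ιM i j * matrixUnit ιM k l = if j = k then matrixUnit ιM i l else 0 := by
  rw [matrixUnit, matrixUnit, ← map_mul]
  split_ifs with h
  · rw [h, single_mul_single_same, one_mul, matrixUnit]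
  · rw [single_mul_single_of_ne _ _ _ _ h, map_zero]

theorem sum_matrixUnit_self : ∑ i, matrixUnit ιM i i = 1 := by
  simp only [matrixUnit, ← map_sum, sum_single_one, map_one]

theorem smul_matrixUnit (i j : ι) (c : K) : c • matrixUnit ιM i j = ιM (single i j c) := by
  rw [matrixUnit, ← map_smul, smul_single, smul_eq_mul, mul_one]

def entry (i j : ι) : P →ₗ[K] P :=
  ∑ k, LinearMap.mulLeftRight K (matrixUnit ιM k i, matrixUnit ιM j k)

theorem entry_apply (i j : ι) (p : P) :
    entry ιM i j p = ∑ k, matrixUnit ιM k i * p * matrixUnit ιM j k := by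
  simp [entry]

theorem matrixUnit_mul_entry (a b i j : ι) (p : P) :
    matrixUnit ιM a b * entry ιM i j p = matrixUnit ιM a i * p * matrixUnit ιM j b := by
  simp [entry_apply, Finset.mul_sum, ← mul_assoc, matrixUnit_mul_matrixUnit]

theorem entry_mul_matrixUnit (a b i j : ι) (p : P) :
    entry ιM i j p * matrixUnit ιM a b = matrixUnit ιM a i * p * matrixUnit ιM j b := by
  simp [entry_apply, Finset.sum_mul, mul_assoc, matrixUnit_mul_matrixUnit]

theorem entry_mem_centralizer (i j : ι) (p : P) :
    entry ιM i j p ∈ Subalgebra.centralizer K (Set.range ιM) := by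
  rw [Subalgebra.mem_centralizer_iff]
  rintro _ ⟨N, rfl⟩
  induction N using Matrix.induction_on' with
  | h_zero => simp
  | h_add M N hM hN => simp only [map_add, add_mul, mul_add, hM, hN]
  | h_std_basis a b c =>
    rw [← smul_matrixUnit, smul_mul_assoc, mul_smul_comm, matrixUnit_mul_entry,
      entry_mul_matrixUnit]

theorem sum_entry_mul_entry (i j : ι) (x y : P) :
    ∑ l, entry ιM i l x * entry ιM l j y = entry ιM i j (x * y) := by
  calc ∑ l, entry ιM i l x * entry ιM l j y
      = ∑ l, ∑ k, matrixUnit ιM k i * x * (matrixUnit ιM l l * y * matrixUnit ιM j k) := by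
        refine Finset.sum_congr rfl fun l _ => ?_
        rw [entry_apply ιM i l, Finset.sum_mul]
        exact Finset.sum_congr rfl fun k _ => by rw [mul_assoc (_ * x), matrixUnit_mul_entry]
    _ = ∑ k, matrixUnit ιM k i * x * ((∑ l, matrixUnit ιM l l) * y * matrixUnit ιM j k) := by
        rw [Finset.sum_comm]
        simp only [Finset.sum_mul, Finset.mul_sum]
    _ = entry ιM i j (x * y) := by
        simp only [sum_matrixUnit_self, one_mul, entry_apply, mul_assoc]

theorem entry_map (i j : ι) (N : Matrix ι ι K) :
    entry ιM i j (ιM N) = algebraMap K P (N i j) := by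
  simp only [entry_apply, matrixUnit, ← map_mul, ← map_sum, single_mul_mul_single, one_mul,
    mul_one, sum_single_eq_diagonal, ← smul_one_eq_diagonal, ← Algebra.algebraMap_eq_smul_one,
    AlgHom.commutes]

theorem entry_one (i j : ι) : entry ιM i j 1 = if i = j then 1 else 0 := by
  simpa [one_apply, apply_ite (algebraMap K P)] using entry_map ιM i j 1

theorem entry_self_of_mem_centralizer {r : P}
    (hr : r ∈ Subalgebra.centralizer K (Set.range ιM)) (i : ι) : entry ιM i i r = r := by
  rw [Subalgebra.mem_centralizer_iff] at hr
  simp only [entry_apply, hr _ (Set.mem_range_self _), matrixUnit, mul_assoc, ← map_mul,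
    single_mul_single_same, ← Finset.mul_sum, ← map_sum, sum_single_one, map_one,
    mul_one]

def entryHom : P →ₐ[K] Matrix ι ι (Subalgebra.centralizer K (Set.range ιM)) where
  toFun p := of fun i j => ⟨entry ιM i j p, entry_mem_centralizer ιM i j p⟩
  map_one' := by
    ext i j
    rcases eq_or_ne i j with rfl | h <;> simp [entry_one, *]
  map_mul' x y := by
    ext i j
    simp [mul_apply, ← sum_entry_mul_entry]
  map_zero' := by
    ext
    simp
  map_add' x y := by
    ext
    simp
  commutes' c := by
    ext i j
    show entry ιM i j (algebraMap K P c) = _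
    rw [← ιM.commutes, entry_map]
    by_cases h : i = j <;> simp [algebraMap_matrix_apply, h]

theorem coe_entryHom_apply (p : P) (i j : ι) : (entryHom ιM p i j : P) = entry ιM i j p :=
  rfl

theorem entryHom_apply_self (r : Subalgebra.centralizer K (Set.range ιM)) (i : ι) :
    entryHom ιM r i i = r :=
  Subtype.ext (entry_self_of_mem_centralizer ιM r.2 i)

theorem entryHom_comp : (entryHom ιM).comp ιM = (Algebra.ofId K _).mapMatrix := by
  ext N i j
  simp [coe_entryHom_apply, entry_map]

end MatrixUnits

section MapsToMatrices

variable {K : Type*} [CommSemiring K] {ι : Type*} [Fintype ι] [DecidableEq ι]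
  {P : Type*} [Semiring P] [Algebra K P] {ιM : Matrix ι ι K →ₐ[K] P}
  {B : Type*} [Semiring B] [Algebra K B] {F : P →ₐ[K] Matrix ι ι B}
  (hF : F.comp ιM = (Algebra.ofId K B).mapMatrix)
include hF

theorem map_matrixUnit (i j : ι) : F (matrixUnit ιM i j) = single i j 1 := by
  rw [matrixUnit, ← AlgHom.comp_apply, hF]
  simp

theorem map_entry (p : P) (i j : ι) : F (entry ιM i j p) = F p i j • 1 := by
  simp only [entry_apply, map_sum, map_mul, map_matrixUnit hF, single_mul_mul_single, one_mul,
    mul_one, sum_single_eq_diagonal, smul_one_eq_diagonal]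

theorem map_eq_smul_one_of_mem_centralizer {r : P}
    (hr : r ∈ Subalgebra.centralizer K (Set.range ιM)) (i : ι) : F r = F r i i • 1 := by
  conv_lhs => rw [← entry_self_of_mem_centralizer ιM hr i]
  exact map_entry hF r i i

def diagEntryHom (i₀ : ι) : Subalgebra.centralizer K (Set.range ιM) →ₐ[K] B where
  toFun r := F r i₀ i₀
  map_one' := by simp
  map_mul' r s := by
    rw [Subalgebra.coe_mul, map_mul, map_eq_smul_one_of_mem_centralizer hF r.2 i₀,
      map_eq_smul_one_of_mem_centralizer hF s.2 i₀]
    simp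
  map_zero' := by simp
  map_add' r s := by simp
  commutes' c := by simp [algebraMap_matrix_apply]

theorem diagEntryHom_apply (i₀ : ι) (r : Subalgebra.centralizer K (Set.range ιM)) :
    diagEntryHom hF i₀ r = F r i₀ i₀ :=
  rfl

theorem diagEntryHom_smul_one (i₀ : ι) (r : Subalgebra.centralizer K (Set.range ιM)) :
    diagEntryHom hF i₀ r • 1 = F r :=
  (map_eq_smul_one_of_mem_centralizer hF r.2 i₀).symm

theorem mapMatrix_comp_comp_eq_ofId {B' : Type*} [Semiring B'] [Algebra K B'] (h : B →ₐ[K] B') :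
    (h.mapMatrix.comp F).comp ιM = (Algebra.ofId K B').mapMatrix := by
  rw [AlgHom.comp_assoc, hF, AlgHom.mapMatrix_comp,
    Subsingleton.elim (h.comp _) (Algebra.ofId K B')]

theorem diagEntryHom_mapMatrix_comp {B' : Type*} [Semiring B'] [Algebra K B'] (h : B →ₐ[K] B')
    (i₀ : ι) :
    diagEntryHom (mapMatrix_comp_comp_eq_ofId hF h) i₀ = h.comp (diagEntryHom hF i₀) :=
  rfl

end MapsToMatrices

theorem forall_commute_mapMatrix_ofId_iff {K : Type*} [CommSemiring K] {ι : Type*} [Fintype ι]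
    [DecidableEq ι] {B : Type*} [Semiring B] [Algebra K B] (M : Matrix ι ι B) :
    (∀ N : Matrix ι ι K,
        M * (Algebra.ofId K B).mapMatrix N = (Algebra.ofId K B).mapMatrix N * M)
      ↔ ∃ b : B, M = b • (1 : Matrix ι ι B) := by
  simp_rw [smul_one_eq_diagonal, ← scalar_apply, eq_comm (a := M), ← Set.mem_range]
  constructor
  · refine fun hM => mem_range_scalar_iff_commute_single'.mpr fun i j => ?_
    simpa [Commute, SemiconjBy] using (hM (single i j 1)).symm
  · rintro ⟨b, rfl⟩ N
    exact scalar_commute_iff.mpr (ext fun i j => by simp [Algebra.commutes])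

section Coproduct

variable {K : Type*} [CommSemiring K] {ι : Type*} [Fintype ι] [DecidableEq ι]
  {A : Type*} [Semiring A] [Algebra K A] {P : Type*} [Semiring P] [Algebra K P]
  {ιA : A →ₐ[K] P} (ιM : Matrix ι ι K →ₐ[K] P) {B : Type*} [Semiring B] [Algebra K B]
  (hP : ∀ f : A →ₐ[K] Matrix ι ι B, ∃! F : P →ₐ[K] Matrix ι ι B,
    F.comp ιA = f ∧ F.comp ιM = (Algebra.ofId K B).mapMatrix)

def rootEquiv (i₀ : ι) :
    (A →ₐ[K] Matrix ι ι B) ≃ (Subalgebra.centralizer K (Set.range ιM) →ₐ[K] B) where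
  toFun f := diagEntryHom (hP f).exists.choose_spec.2 i₀
  invFun g := (g.mapMatrix.comp (entryHom ιM)).comp ιA
  left_inv f := by
    obtain ⟨hA, hM⟩ := (hP f).exists.choose_spec
    ext a i j
    change (hP f).exists.choose (entry ιM i j (ιA a)) i₀ i₀ = f a i j
    rw [map_entry hM, ← AlgHom.comp_apply, hA, Matrix.smul_apply, one_apply_eq, smul_eq_mul,
      mul_one]
  right_inv g := by
    have hL := (hP _).unique (hP _).exists.choose_spec
      ⟨rfl, mapMatrix_comp_comp_eq_ofId (entryHom_comp ιM) g⟩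
    ext r
    simp [diagEntryHom_apply, hL, entryHom_apply_self]

theorem rootEquiv_apply {f : A →ₐ[K] Matrix ι ι B} {F : P →ₐ[K] Matrix ι ι B}
    (hA : F.comp ιA = f) (hM : F.comp ιM = (Algebra.ofId K B).mapMatrix) (i₀ : ι) :
    rootEquiv ιM hP i₀ f = diagEntryHom hM i₀ := by
  obtain rfl := (hP f).unique ⟨hA, hM⟩ (hP f).exists.choose_spec
  rfl

theorem rootEquiv_smul_one {f : A →ₐ[K] Matrix ι ι B} {F : P →ₐ[K] Matrix ι ι B}
    (hA : F.comp ιA = f) (hM : F.comp ιM = (Algebra.ofId K B).mapMatrix) (i₀ : ι)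
    (r : Subalgebra.centralizer K (Set.range ιM)) : rootEquiv ιM hP i₀ f r • 1 = F r := by
  rw [rootEquiv_apply ιM hP hA hM, diagEntryHom_smul_one]

theorem rootEquiv_mapMatrix_comp {B' : Type*} [Semiring B'] [Algebra K B']
    (hP' : ∀ f : A →ₐ[K] Matrix ι ι B', ∃! F : P →ₐ[K] Matrix ι ι B',
      F.comp ιA = f ∧ F.comp ιM = (Algebra.ofId K B').mapMatrix)
    (h : B →ₐ[K] B') (f : A →ₐ[K] Matrix ι ι B) (i₀ : ι) :
    rootEquiv ιM hP' i₀ (h.mapMatrix.comp f) = h.comp (rootEquiv ιM hP i₀ f) := by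
  obtain ⟨hA, hM⟩ := (hP f).exists.choose_spec
  have hA' : (h.mapMatrix.comp (hP f).exists.choose).comp ιA = h.mapMatrix.comp f := by
    rw [AlgHom.comp_assoc, hA]
  rw [rootEquiv_apply ιM hP hA hM,
    rootEquiv_apply ιM hP' hA' (mapMatrix_comp_comp_eq_ofId hM h), diagEntryHom_mapMatrix_comp]

end Coproduct

end RootAlgebra

theorem statement_13_general (K : Type u) [Field K] (A : Type v) [Ring A] [Algebra K A]
    (n : ℕ) (hn : 0 < n)
    (P : Type v) [Ring P] [Algebra K P]
    (ιA : A →ₐ[K] P) (ιM : Matrix (Fin n) (Fin n) K →ₐ[K] P)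
    (huniv : ∀ (C : Type v) [Ring C] [Algebra K C] (f : A →ₐ[K] C)
        (g : Matrix (Fin n) (Fin n) K →ₐ[K] C),
        ∃! h : P →ₐ[K] C, h.comp ιA = f ∧ h.comp ιM = g) :
    ∃ Φ : ∀ (B : Type v) [Ring B] [Algebra K B],
        (A →ₐ[K] Matrix (Fin n) (Fin n) B) ≃ (↥(rootAlg ιM) →ₐ[K] B),
      (∀ (B : Type v) [Ring B] [Algebra K B],
        ∀ M : Matrix (Fin n) (Fin n) B,
          (∀ N : Matrix (Fin n) (Fin n) K,
              M * (Algebra.ofId K B).mapMatrix N = (Algebra.ofId K B).mapMatrix N * M)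
            ↔ ∃ b : B, M = b • (1 : Matrix (Fin n) (Fin n) B))
      ∧ (∀ (B : Type v) [Ring B] [Algebra K B]
          (f : A →ₐ[K] Matrix (Fin n) (Fin n) B)
          (F : P →ₐ[K] Matrix (Fin n) (Fin n) B),
          F.comp ιA = f →
          F.comp ιM = (Algebra.ofId K B).mapMatrix →
          ∀ r : ↥(rootAlg ιM),
            F (r : P) = (Φ B f r) • (1 : Matrix (Fin n) (Fin n) B))
      ∧ (∀ (B : Type v) [Ring B] [Algebra K B] (B' : Type v) [Ring B'] [Algebra K B']
          (h : B →ₐ[K] B') (f : A →ₐ[K] Matrix (Fin n) (Fin n) B),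
          Φ B' ((AlgHom.mapMatrix h).comp f) = h.comp (Φ B f)) := by
  have hP (B : Type v) [Ring B] [Algebra K B] (f : A →ₐ[K] Matrix (Fin n) (Fin n) B) :
      ∃! F : P →ₐ[K] Matrix (Fin n) (Fin n) B,
        F.comp ιA = f ∧ F.comp ιM = (Algebra.ofId K B).mapMatrix :=
    huniv _ f _
  exact ⟨fun B _ _ => RootAlgebra.rootEquiv ιM (hP B) ⟨0, hn⟩,
    fun B _ _ => RootAlgebra.forall_commute_mapMatrix_ofId_iff,
    fun B _ _ _ _ hA hM r => (RootAlgebra.rootEquiv_smul_one ιM (hP B) hA hM _ r).symm,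
    fun B _ _ B' _ _ h f => RootAlgebra.rootEquiv_mapMatrix_comp ιM (hP B) (hP B') h f _⟩

/-- Let `P = A ∗ Mₙ(K)` be the free product (presented by its universal
property) and `ⁿ√A` the centralizer of `Mₙ(K)` in `P`. Then for every `K`-algebra `B`
there is a bijection `Φ_B : Hom(A, Mₙ(B)) ≃ Hom(ⁿ√A, B)`, characterized as follows: for
`f : A → Mₙ(B)`, the induced map `F : P → Mₙ(B)` (with `F∘ιA = f` and `F∘ιM` the
canonical inclusion `Mₙ(K) → Mₙ(B)`) sends each `r ∈ ⁿ√A` to the scalar matrix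
`(Φ_B f r)·1ₙ` (the centralizer of `Mₙ(K)` in `Mₙ(B)` consisting exactly of the scalar
matrices `b·1ₙ`); moreover `Φ` is natural in `B`:
`Φ_{B'}(Mₙ(h)∘f) = h∘Φ_B(f)` for every algebra map `h : B → B'`. -/
theorem statement_13 (K : Type u) [Field K] [CharZero K] (A : Type v) [Ring A] [Algebra K A]
    (n : ℕ) (hn : 0 < n)
    (P : Type v) [Ring P] [Algebra K P]
    (ιA : A →ₐ[K] P) (ιM : Matrix (Fin n) (Fin n) K →ₐ[K] P)
    (huniv : ∀ (C : Type v) [Ring C] [Algebra K C] (f : A →ₐ[K] C)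
        (g : Matrix (Fin n) (Fin n) K →ₐ[K] C),
        ∃! h : P →ₐ[K] C, h.comp ιA = f ∧ h.comp ιM = g) :
    ∃ Φ : ∀ (B : Type v) [Ring B] [Algebra K B],
        (A →ₐ[K] Matrix (Fin n) (Fin n) B) ≃ (↥(rootAlg ιM) →ₐ[K] B),
      (∀ (B : Type v) [Ring B] [Algebra K B],
        ∀ M : Matrix (Fin n) (Fin n) B,
          (∀ N : Matrix (Fin n) (Fin n) K,
              M * (Algebra.ofId K B).mapMatrix N = (Algebra.ofId K B).mapMatrix N * M)
            ↔ ∃ b : B, M = b • (1 : Matrix (Fin n) (Fin n) B))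
      ∧ (∀ (B : Type v) [Ring B] [Algebra K B]
          (f : A →ₐ[K] Matrix (Fin n) (Fin n) B)
          (F : P →ₐ[K] Matrix (Fin n) (Fin n) B),
          F.comp ιA = f →
          F.comp ιM = (Algebra.ofId K B).mapMatrix →
          ∀ r : ↥(rootAlg ιM),
            F (r : P) = (Φ B f r) • (1 : Matrix (Fin n) (Fin n) B))
      ∧ (∀ (B : Type v) [Ring B] [Algebra K B] (B' : Type v) [Ring B'] [Algebra K B']
          (h : B →ₐ[K] B') (f : A →ₐ[K] Matrix (Fin n) (Fin n) B),
          Φ B' ((AlgHom.mapMatrix h).comp f) = h.comp (Φ B f)) :=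
  statement_13_general K A n hn P ιA ιM huniv
end
end

section
/- Let A be an associative unital K-algebra and n a positive integer, and let Aₙ := (ⁿ√A)_ab be the abelianization of ⁿ√A, i.e. the quotient of ⁿ√A by the two-sided ideal generated by all commutators, with quotient map q : ⁿ√A → Aₙ. Then Aₙ is a commutative K-algebra that corepresents the n-dimensional representation functor: for every commutative K-algebra C there is a bijection Ψ_C : Hom_{Alg_K}(Aₙ, C) → Hom_{Alg_K}(A, Mₙ(C)), natural in C, namely Ψ_C(g) := Φ_C^{-1}(g∘q) where Φ is the root-adjunction bijection; naturality means Ψ_{C′}(h∘g) = Mₙ(h)∘Ψ_C(g) for every K-algebra homomorphism h : C → C′ of commutative K-algebras. -/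
noncomputable section

universe u v

/-- Factorization of an algebra map through a surjection along which it is constant. -/
lemma factor_aux {K : Type u} [Field K] {R An C : Type v}
    [Ring R] [Algebra K R] [Ring An] [Algebra K An] [Ring C] [Algebra K C]
    (q : R →ₐ[K] An) (hq : Function.Surjective q) (φ : R →ₐ[K] C)
    (h : ∀ r s : R, q r = q s → φ r = φ s) :
    ∃ g : An →ₐ[K] C, g.comp q = φ := by
  choose σ hσ using hq
  refine ⟨{ toFun := fun a => φ (σ a)
            , map_one' := by
                have := h (σ 1) 1 (by rw [hσ, map_one])
                simpa using this
            , map_mul' := fun a b => by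
                have := h (σ (a * b)) (σ a * σ b) (by rw [hσ, map_mul, hσ, hσ])
                simpa using this
            , map_zero' := by
                have := h (σ 0) 0 (by rw [hσ, map_zero])
                simpa using this
            , map_add' := fun a b => by
                have := h (σ (a + b)) (σ a + σ b) (by rw [hσ, map_add, hσ, hσ])
                simpa using this
            , commutes' := fun k => by
                have := h (σ (algebraMap K An k)) (algebraMap K R k)
                  (by rw [hσ, AlgHom.commutes])
                simpa using this }, ?_⟩
  ext r
  exact h (σ (q r)) r (hσ _)

/-- Let `ⁿ√A` be the root algebra inside the free product
`P = A ∗ Mₙ(K)`, with root-adjunction bijections `Φ_B : Hom(A,Mₙ(B)) ≃ Hom(ⁿ√A,B)`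
(natural in `B`, with their defining property), and let `Aₙ = (ⁿ√A)_ab` be the
abelianization, i.e. the quotient of `ⁿ√A` by the two-sided ideal generated by all
commutators (presented by a surjection `q` with that kernel) — a commutative `K`-algebra.
Then `Aₙ` corepresents the `n`-dimensional representation functor: for every commutative
`K`-algebra `C`, `Ψ_C : Hom(Aₙ,C) → Hom(A,Mₙ(C))`, `g ↦ Φ_C⁻¹(g∘q)`, is a bijection,
natural in `C`: `Ψ_{C'}(h∘g) = Mₙ(h)∘Ψ_C(g)`. -/



theorem statement_14 (K : Type u) [Field K] [CharZero K] (A : Type v) [Ring A] [Algebra K A]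
    (n : ℕ) (hn : 0 < n)
    (P : Type v) [Ring P] [Algebra K P]
    (ιA : A →ₐ[K] P) (ιM : Matrix (Fin n) (Fin n) K →ₐ[K] P)
    (huniv : ∀ (C : Type v) [Ring C] [Algebra K C] (f : A →ₐ[K] C)
        (g : Matrix (Fin n) (Fin n) K →ₐ[K] C),
        ∃! h : P →ₐ[K] C, h.comp ιA = f ∧ h.comp ιM = g)
    (Φ : ∀ (B : Type v) [Ring B] [Algebra K B],
        (A →ₐ[K] Matrix (Fin n) (Fin n) B) ≃ (↥(rootAlg ιM) →ₐ[K] B))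
    (hΦ : ∀ (B : Type v) [Ring B] [Algebra K B]
        (f : A →ₐ[K] Matrix (Fin n) (Fin n) B)
        (F : P →ₐ[K] Matrix (Fin n) (Fin n) B),
        F.comp ιA = f →
        F.comp ιM = (Algebra.ofId K B).mapMatrix →
        ∀ r : ↥(rootAlg ιM), F (r : P) = (Φ B f r) • (1 : Matrix (Fin n) (Fin n) B))
    (hΦnat : ∀ (B : Type v) [Ring B] [Algebra K B] (B' : Type v) [Ring B'] [Algebra K B']
        (h : B →ₐ[K] B') (f : A →ₐ[K] Matrix (Fin n) (Fin n) B),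
        Φ B' ((AlgHom.mapMatrix h).comp f) = h.comp (Φ B f))
    (An : Type v) [CommRing An] [Algebra K An]
    (q : ↥(rootAlg ιM) →ₐ[K] An) (hq : Function.Surjective q)
    (hqker : LinearMap.ker q.toLinearMap
        = Submodule.span K {z : ↥(rootAlg ιM) |
            ∃ x u' v' y : ↥(rootAlg ιM), z = x * (u' * v' - v' * u') * y}) :
    (∀ (C : Type v) [CommRing C] [Algebra K C],
        Function.Bijective (fun g : An →ₐ[K] C => (Φ C).symm (g.comp q)))
    ∧ (∀ (C : Type v) [CommRing C] [Algebra K C] (C' : Type v) [CommRing C'] [Algebra K C']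
        (h : C →ₐ[K] C') (g : An →ₐ[K] C),
        (Φ C').symm ((h.comp g).comp q)
          = (AlgHom.mapMatrix h).comp ((Φ C).symm (g.comp q))) := by
  have key : ∀ (C : Type v) [CommRing C] [Algebra K C] (φ : ↥(rootAlg ιM) →ₐ[K] C),
      ∃ g : An →ₐ[K] C, g.comp q = φ := by
    intro C _ _ φ
    apply factor_aux q hq φ
    intro r s hrs
    have hsub : r - s ∈ LinearMap.ker q.toLinearMap := by
      simp [LinearMap.mem_ker, map_sub, hrs]
    rw [hqker] at hsub
    have hle : Submodule.span K {z : ↥(rootAlg ιM) |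
        ∃ x u' v' y : ↥(rootAlg ιM), z = x * (u' * v' - v' * u') * y}
        ≤ LinearMap.ker φ.toLinearMap := by
      rw [Submodule.span_le]
      rintro z ⟨x, u', v', y, rfl⟩
      simp only [SetLike.mem_coe, LinearMap.mem_ker, AlgHom.toLinearMap_apply,
        map_mul, map_sub]
      rw [mul_comm (φ u') (φ v')]
      ring
    have := hle hsub
    simp only [LinearMap.mem_ker, AlgHom.toLinearMap_apply, map_sub, sub_eq_zero] at this
    exact this
  constructor
  · intro C _ _
    constructor
    · intro g g' hgg'
      have h2 : g.comp q = g'.comp q := (Φ C).symm.injective hgg'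
      ext a
      obtain ⟨r, rfl⟩ := hq a
      exact DFunLike.congr_fun h2 r
    · intro f
      obtain ⟨g, hg⟩ := key C (Φ C f)
      exact ⟨g, by simp [hg]⟩
  · intro C _ _ C' _ _ h g
    have hcomp : (h.comp g).comp q = h.comp (g.comp q) := by
      ext r; rfl
    rw [hcomp]
    apply (Φ C').injective
    rw [Equiv.apply_symm_apply]
    rw [hΦnat C C' h ((Φ C).symm (g.comp q))]
    rw [Equiv.apply_symm_apply]
end
end
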